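/- arXiv:2108.07525 — 7 statements merged into one kernel-verified Lean document; each statement's English description precedes it below -/
import Mathlib

section
/- Let (A,H) be a left Hopf algebroid, i.e. a left bialgebroid for which the Galois map β : H ⊗_{A^op} H → H ⊗_A H, b ⊗ b' ↦ b_{(1)} ⊗ b_{(2)}b', is invertible. If I is a two-sided ideal and two-sided coideal of H such that β^{-1}(h ⊗ 1) lies in the image of I ⊗_{A^op} H + H ⊗_{A^op} I for every h ∈ I, then the quotient bialgebroid (A, H/I) is again a left Hopf algebroid. -/
open TensorProduct

/-! ### A general framework for left bialgebroids and left Hopf algebroids.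

Comultiplications are encoded at the level of chosen linear representatives in the
plain tensor product `H ⊗[k] H`; the tensor product over the base algebra `A` is the
quotient by the `balancer` submodule spanned by the elements
`(t a * x) ⊗ y - x ⊗ (s a * y)`.  Axioms that genuinely live in `H ⊗_A H` are stated
modulo this submodule. -/

section BialgebroidFramework

variable (k A H : Type) [CommRing k] [Ring A] [Ring H] [Algebra k A] [Algebra k H]

/-- The submodule of `H ⊗[k] H` whose quotient is `H ⊗_A H` for the bimodule
structure `a · h · a' = s(a) t(a') h`. -/
def balancer (s : A →ₐ[k] H) (t : A →ₗ[k] H) : Submodule k (H ⊗[k] H) :=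
  Submodule.span k {z | ∃ (a : A) (x y : H), z = (t a * x) ⊗ₜ[k] y - x ⊗ₜ[k] (s a * y)}

/-- The analogous submodule for the triple tensor product. -/
def balancer3 (s : A →ₐ[k] H) (t : A →ₗ[k] H) : Submodule k (H ⊗[k] (H ⊗[k] H)) :=
  Submodule.span k
    ({z | ∃ (a : A) (x y w : H), z = (t a * x) ⊗ₜ[k] (y ⊗ₜ[k] w) - x ⊗ₜ[k] ((s a * y) ⊗ₜ[k] w)} ∪
     {z | ∃ (a : A) (x y w : H), z = x ⊗ₜ[k] ((t a * y) ⊗ₜ[k] w) - x ⊗ₜ[k] (y ⊗ₜ[k] (s a * w))})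

/-- The submodule of `H ⊗[k] H` whose quotient is `H ⊗_{A^op} H`
(balanced over the target map: `(x * t a) ⊗ y ~ x ⊗ (t a * y)`). -/
def opBalancer (t : A →ₗ[k] H) : Submodule k (H ⊗[k] H) :=
  Submodule.span k {z | ∃ (a : A) (x y : H), z = (x * t a) ⊗ₜ[k] y - x ⊗ₜ[k] (t a * y)}

/-- A left `A`-bialgebroid structure on the `k`-algebra `H`. -/
structure LeftBialgebroid where
  /-- the source map -/
  src : A →ₐ[k] H
  /-- the target map (an anti-algebra map) -/
  tgt : A →ₗ[k] H
  tgt_one : tgt 1 = 1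
  tgt_mul : ∀ a b : A, tgt (a * b) = tgt b * tgt a
  src_tgt_comm : ∀ a b : A, src a * tgt b = tgt b * src a
  /-- a linear representative of the comultiplication `H → H ⊗_A H` -/
  comul : H →ₗ[k] H ⊗[k] H
  /-- the counit -/
  counit : H →ₗ[k] A
  counit_one : counit 1 = 1
  counit_src : ∀ (a : A) (h : H), counit (src a * h) = a * counit h
  counit_tgt : ∀ (a : A) (h : H), counit (tgt a * h) = counit h * a
  counit_mul : ∀ g h : H, counit (g * h) = counit (g * src (counit h))
  comul_one : comul 1 - (1 : H) ⊗ₜ[k] (1 : H) ∈ balancer k A H src tgt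
  comul_mul : ∀ g h : H, comul (g * h) - comul g * comul h ∈ balancer k A H src tgt
  comul_bimod : ∀ (a a' : A) (h : H),
    comul (src a * (tgt a' * h)) -
      (TensorProduct.map (LinearMap.mulLeft k (src a)) (LinearMap.mulLeft k (tgt a')))
        (comul h) ∈ balancer k A H src tgt
  comul_coassoc : ∀ h : H,
    (TensorProduct.assoc k H H H) ((LinearMap.rTensor H comul) (comul h)) -
      (LinearMap.lTensor H comul) (comul h) ∈ balancer3 k A H src tgt
  comul_counit_left : ∀ h : H,
    (LinearMap.mul' k H) ((LinearMap.rTensor H (src.toLinearMap ∘ₗ counit)) (comul h)) = h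
  comul_counit_right : ∀ h : H,
    (LinearMap.mul' k H)
      ((LinearMap.rTensor H (tgt ∘ₗ counit)) ((TensorProduct.comm k H H) (comul h))) = h

variable {k A H}

/-- Two-sided ideals, encoded as `k`-submodules closed under multiplication. -/
structure IsTwoSidedIdeal (I : Submodule k H) : Prop where
  mul_mem_left : ∀ (h x : H), x ∈ I → h * x ∈ I
  mul_mem_right : ∀ (h x : H), x ∈ I → x * h ∈ I

variable (k H) in
/-- The image of `I ⊗ H` inside `H ⊗[k] H`. -/
def leftSlice (I : Submodule k H) : Submodule k (H ⊗[k] H) :=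
  Submodule.span k {z | ∃ x ∈ I, ∃ y : H, z = x ⊗ₜ[k] y}

variable (k H) in
/-- The image of `H ⊗ I` inside `H ⊗[k] H`. -/
def rightSlice (I : Submodule k H) : Submodule k (H ⊗[k] H) :=
  Submodule.span k {z | ∃ y : H, ∃ x ∈ I, z = y ⊗ₜ[k] x}

/-- `I` is a two-sided coideal of the `A`-coring `H`:
`Δ(I) ⊆ Im(I ⊗_A H + H ⊗_A I)` and `ε(I) = 0`. -/
structure IsCoideal (B : LeftBialgebroid k A H) (I : Submodule k H) : Prop where
  comul_mem : ∀ x ∈ I,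
    B.comul x ∈ leftSlice k H I ⊔ rightSlice k H I ⊔ balancer k A H B.src B.tgt
  counit_eq_zero : ∀ x ∈ I, B.counit x = 0

/-- A morphism of left bialgebroids over the same base `A`. -/
def IsBialgebroidHom {H' : Type} [Ring H'] [Algebra k H']
    (B : LeftBialgebroid k A H) (B' : LeftBialgebroid k A H') (f : H →ₐ[k] H') : Prop :=
  (∀ a : A, f (B.src a) = B'.src a) ∧ (∀ a : A, f (B.tgt a) = B'.tgt a) ∧
  (∀ h : H, B'.counit (f h) = B.counit h) ∧
  (∀ h : H, (TensorProduct.map f.toLinearMap f.toLinearMap) (B.comul h) - B'.comul (f h)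
      ∈ balancer k A H' B'.src B'.tgt)

variable (k A H) in
/-- A representative of the Galois map `β : H ⊗_{A^op} H → H ⊗_A H`,
`b ⊗ b' ↦ b₍₁₎ ⊗ b₍₂₎ b'`. -/
noncomputable def galoisRep (B : LeftBialgebroid k A H) : H ⊗[k] H →ₗ[k] H ⊗[k] H :=
  TensorProduct.lift
    (LinearMap.mk₂ k (fun b b' => B.comul b * ((1 : H) ⊗ₜ[k] b'))
      (by intros; simp [mul_add, add_mul, TensorProduct.tmul_add, TensorProduct.add_tmul, smul_mul_assoc, mul_smul_comm, ← TensorProduct.smul_tmul', TensorProduct.tmul_smul])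
      (by intros; simp [mul_add, add_mul, TensorProduct.tmul_add, TensorProduct.add_tmul, smul_mul_assoc, mul_smul_comm, ← TensorProduct.smul_tmul', TensorProduct.tmul_smul])
      (by intros; simp [mul_add, add_mul, TensorProduct.tmul_add, TensorProduct.add_tmul, smul_mul_assoc, mul_smul_comm, ← TensorProduct.smul_tmul', TensorProduct.tmul_smul])
      (by intros; simp [mul_add, add_mul, TensorProduct.tmul_add, TensorProduct.add_tmul, smul_mul_assoc, mul_smul_comm, ← TensorProduct.smul_tmul', TensorProduct.tmul_smul]))

/-- A left bialgebroid is a left Hopf algebroid (Schauenburg) when the Galois map,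
viewed as a map `H ⊗_{A^op} H → H ⊗_A H`, is bijective. -/
structure IsLeftHopf (B : LeftBialgebroid k A H) : Prop where
  descends : opBalancer k A H B.tgt ≤
    (balancer k A H B.src B.tgt).comap (galoisRep k A H B)
  bijective : Function.Bijective
    (Submodule.mapQ (opBalancer k A H B.tgt) (balancer k A H B.src B.tgt)
      (galoisRep k A H B) descends)

/-- The (left) Hopf condition for an ideal: for every `h ∈ I`,
`β⁻¹(h ⊗ 1)` lies in the image of `I ⊗_{A^op} H + H ⊗_{A^op} I`; equivalently there is a
representative `w` in the slices with `β(w) = h ⊗ 1` in `H ⊗_A H`. -/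
def HopfIdealCondition (B : LeftBialgebroid k A H) (I : Submodule k H) : Prop :=
  ∀ h ∈ I, ∃ w ∈ leftSlice k H I ⊔ rightSlice k H I,
    galoisRep k A H B w - h ⊗ₜ[k] (1 : H) ∈ balancer k A H B.src B.tgt

/-- A Hopf ideal pair `(J, I)` of a left Hopf algebroid, allowing base change. -/
structure IsHopfIdealPair (B : LeftBialgebroid k A H)
    (J : Submodule k A) (I : Submodule k H) : Prop where
  idealJ : IsTwoSidedIdeal J
  idealI : IsTwoSidedIdeal I
  src_mem : ∀ a ∈ J, B.src a ∈ I
  tgt_mem : ∀ a ∈ J, B.tgt a ∈ I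
  comul_mem : ∀ x ∈ I,
    B.comul x ∈ leftSlice k H I ⊔ rightSlice k H I ⊔ balancer k A H B.src B.tgt
  counit_mem : ∀ x ∈ I, B.counit x ∈ J
  hopf : HopfIdealCondition B I

/-- An (invertible) antipode on a left bialgebroid. -/
structure Antipode (B : LeftBialgebroid k A H) where
  S : H ≃ₗ[k] H
  S_one : S 1 = 1
  S_mul : ∀ g h : H, S (g * h) = S h * S g
  S_src : ∀ a : A, S (B.src a) = B.tgt a
  antipode2 : ∀ b : H,
    (TensorProduct.lift (LinearMap.mk₂ k
        (fun x y => B.comul (S x) * (y ⊗ₜ[k] (1 : H)))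
        (by intros; simp [mul_add, add_mul, TensorProduct.tmul_add, TensorProduct.add_tmul, smul_mul_assoc, mul_smul_comm, ← TensorProduct.smul_tmul', TensorProduct.tmul_smul])
        (by intros; simp [mul_add, add_mul, TensorProduct.tmul_add, TensorProduct.add_tmul, smul_mul_assoc, mul_smul_comm, ← TensorProduct.smul_tmul', TensorProduct.tmul_smul])
        (by intros; simp [mul_add, add_mul, TensorProduct.tmul_add, TensorProduct.add_tmul, smul_mul_assoc, mul_smul_comm, ← TensorProduct.smul_tmul', TensorProduct.tmul_smul])
        (by intros; simp [mul_add, add_mul, TensorProduct.tmul_add, TensorProduct.add_tmul, smul_mul_assoc, mul_smul_comm, ← TensorProduct.smul_tmul', TensorProduct.tmul_smul])))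
      (B.comul b) - (1 : H) ⊗ₜ[k] (S b) ∈ balancer k A H B.src B.tgt
  antipode3 : ∀ b : H,
    (TensorProduct.lift (LinearMap.mk₂ k
        (fun x y => B.comul (S.symm y) * ((1 : H) ⊗ₜ[k] x))
        (by intros; simp [mul_add, add_mul, TensorProduct.tmul_add, TensorProduct.add_tmul, smul_mul_assoc, mul_smul_comm, ← TensorProduct.smul_tmul', TensorProduct.tmul_smul])
        (by intros; simp [mul_add, add_mul, TensorProduct.tmul_add, TensorProduct.add_tmul, smul_mul_assoc, mul_smul_comm, ← TensorProduct.smul_tmul', TensorProduct.tmul_smul])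
        (by intros; simp [mul_add, add_mul, TensorProduct.tmul_add, TensorProduct.add_tmul, smul_mul_assoc, mul_smul_comm, ← TensorProduct.smul_tmul', TensorProduct.tmul_smul])
        (by intros; simp [mul_add, add_mul, TensorProduct.tmul_add, TensorProduct.add_tmul, smul_mul_assoc, mul_smul_comm, ← TensorProduct.smul_tmul', TensorProduct.tmul_smul])))
      (B.comul b) - (S.symm b) ⊗ₜ[k] (1 : H) ∈ balancer k A H B.src B.tgt

end BialgebroidFramework

section HopfHelpers

variable {k A H : Type} [CommRing k] [Ring A] [Ring H] [Algebra k A] [Algebra k H]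

lemma galoisRep_tmul (B : LeftBialgebroid k A H) (b b' : H) :
    galoisRep k A H B (b ⊗ₜ[k] b') = B.comul b * ((1 : H) ⊗ₜ[k] b') := by
  simp [galoisRep]

lemma balancer_mul_right (s : A →ₐ[k] H) (t : A →ₗ[k] H) (y : H) :
    ∀ z ∈ balancer k A H s t, z * ((1 : H) ⊗ₜ[k] y) ∈ balancer k A H s t := by
  intro z hz
  refine Submodule.span_induction ?_ ?_ ?_ ?_ hz
  · rintro _ ⟨a, x, y', rfl⟩
    rw [sub_mul, Algebra.TensorProduct.tmul_mul_tmul, Algebra.TensorProduct.tmul_mul_tmul,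
      mul_one, mul_one]
    refine Submodule.subset_span ⟨a, x, y' * y, by rw [mul_assoc]⟩
  · simp
  · intro a b _ _ ha hb
    rw [add_mul]; exact Submodule.add_mem _ ha hb
  · intro c a _ ha
    rw [smul_mul_assoc]; exact Submodule.smul_mem _ _ ha

lemma opBalancer_mul_right (t : A →ₗ[k] H) (y : H) :
    ∀ z ∈ opBalancer k A H t, z * ((1 : H) ⊗ₜ[k] y) ∈ opBalancer k A H t := by
  intro z hz
  refine Submodule.span_induction ?_ ?_ ?_ ?_ hz
  · rintro _ ⟨a, x, y', rfl⟩
    rw [sub_mul, Algebra.TensorProduct.tmul_mul_tmul, Algebra.TensorProduct.tmul_mul_tmul,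
      mul_one, mul_one]
    refine Submodule.subset_span ⟨a, x, y' * y, by rw [mul_assoc]⟩
  · simp
  · intro a b _ _ ha hb
    rw [add_mul]; exact Submodule.add_mem _ ha hb
  · intro c a _ ha
    rw [smul_mul_assoc]; exact Submodule.smul_mem _ _ ha

lemma leftSlice_mul_right (I : Submodule k H) (y : H) :
    ∀ z ∈ leftSlice k H I, z * ((1 : H) ⊗ₜ[k] y) ∈ leftSlice k H I := by
  intro z hz
  refine Submodule.span_induction ?_ ?_ ?_ ?_ hz
  · rintro _ ⟨x, hx, y', rfl⟩
    rw [Algebra.TensorProduct.tmul_mul_tmul, mul_one]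
    exact Submodule.subset_span ⟨x, hx, y' * y, rfl⟩
  · simp
  · intro a b _ _ ha hb
    rw [add_mul]; exact Submodule.add_mem _ ha hb
  · intro c a _ ha
    rw [smul_mul_assoc]; exact Submodule.smul_mem _ _ ha

lemma rightSlice_mul_right (I : Submodule k H) (hI : IsTwoSidedIdeal I) (y : H) :
    ∀ z ∈ rightSlice k H I, z * ((1 : H) ⊗ₜ[k] y) ∈ rightSlice k H I := by
  intro z hz
  refine Submodule.span_induction ?_ ?_ ?_ ?_ hz
  · rintro _ ⟨y', x, hx, rfl⟩
    rw [Algebra.TensorProduct.tmul_mul_tmul, mul_one]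
    exact Submodule.subset_span ⟨y', x * y, hI.mul_mem_right y x hx, rfl⟩
  · simp
  · intro a b _ _ ha hb
    rw [add_mul]; exact Submodule.add_mem _ ha hb
  · intro c a _ ha
    rw [smul_mul_assoc]; exact Submodule.smul_mem _ _ ha

/-- Anything times `1 ⊗ x`, `x ∈ I`, lands in the right slice. -/
lemma mul_tmul_mem_rightSlice (I : Submodule k H) (hI : IsTwoSidedIdeal I)
    {x : H} (hx : x ∈ I) (u : H ⊗[k] H) :
    u * ((1 : H) ⊗ₜ[k] x) ∈ rightSlice k H I := by
  induction u using TensorProduct.induction_on with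
  | zero => simp
  | tmul a b =>
      rw [Algebra.TensorProduct.tmul_mul_tmul, mul_one]
      exact Submodule.subset_span ⟨a, b * x, hI.mul_mem_left b x hx, rfl⟩
  | add a b ha hb =>
      rw [add_mul]; exact Submodule.add_mem _ ha hb

lemma galoisRep_mul_right (B : LeftBialgebroid k A H) (u : H ⊗[k] H) (y : H) :
    galoisRep k A H B (u * ((1 : H) ⊗ₜ[k] y)) = galoisRep k A H B u * ((1 : H) ⊗ₜ[k] y) := by
  induction u using TensorProduct.induction_on with
  | zero => simp
  | tmul b b' =>
      rw [Algebra.TensorProduct.tmul_mul_tmul, mul_one, galoisRep_tmul, galoisRep_tmul,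
        mul_assoc, Algebra.TensorProduct.tmul_mul_tmul, mul_one]
  | add a b ha hb =>
      rw [add_mul, map_add, map_add, ha, hb, add_mul]

variable {H' : Type} [Ring H'] [Algebra k H']

lemma tensorMap_eq_algMap (π : H →ₐ[k] H') :
    TensorProduct.map π.toLinearMap π.toLinearMap
      = (Algebra.TensorProduct.map π π).toLinearMap := by
  apply TensorProduct.ext'
  intro x y
  rfl

lemma tensorMap_mul (π : H →ₐ[k] H') (u v : H ⊗[k] H) :
    TensorProduct.map π.toLinearMap π.toLinearMap (u * v)
      = TensorProduct.map π.toLinearMap π.toLinearMap u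
        * TensorProduct.map π.toLinearMap π.toLinearMap v := by
  rw [tensorMap_eq_algMap]
  exact map_mul (Algebra.TensorProduct.map π π) u v

lemma rTensor_range_eq_leftSlice (I : Submodule k H) :
    LinearMap.range (LinearMap.rTensor H I.subtype) = leftSlice k H I := by
  apply le_antisymm
  · rintro _ ⟨z, rfl⟩
    induction z using TensorProduct.induction_on with
    | zero => simp
    | tmul a b => exact Submodule.subset_span ⟨a.1, a.2, b, rfl⟩
    | add a b ha hb => rw [map_add]; exact Submodule.add_mem _ ha hb
  · rw [leftSlice, Submodule.span_le]
    rintro _ ⟨x, hx, y, rfl⟩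
    exact ⟨(⟨x, hx⟩ : I) ⊗ₜ[k] y, rfl⟩

lemma lTensor_range_eq_rightSlice (I : Submodule k H) :
    LinearMap.range (LinearMap.lTensor H I.subtype) = rightSlice k H I := by
  apply le_antisymm
  · rintro _ ⟨z, rfl⟩
    induction z using TensorProduct.induction_on with
    | zero => simp
    | tmul a b => exact Submodule.subset_span ⟨a, b.1, b.2, rfl⟩
    | add a b ha hb => rw [map_add]; exact Submodule.add_mem _ ha hb
  · rw [rightSlice, Submodule.span_le]
    rintro _ ⟨y, x, hx, rfl⟩
    exact ⟨y ⊗ₜ[k] (⟨x, hx⟩ : I), rfl⟩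

/-- Over a field, the kernel of `π ⊗ π` is `I ⊗ H + H ⊗ I`. -/
lemma ker_tensorMap (kk : Type) [Field kk] {HH HH' : Type} [Ring HH] [Ring HH']
    [Algebra kk HH] [Algebra kk HH']
    (π : HH →ₐ[kk] HH') (hπ : Function.Surjective π)
    (I : Submodule kk HH) (hker : ∀ h : HH, π h = 0 ↔ h ∈ I) :
    LinearMap.ker (TensorProduct.map π.toLinearMap π.toLinearMap)
      = leftSlice kk HH I ⊔ rightSlice kk HH I := by
  have hexact : Function.Exact I.subtype π.toLinearMap := by
    intro y
    simp only [AlgHom.toLinearMap_apply, hker]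
    constructor
    · intro hy; exact ⟨⟨y, hy⟩, rfl⟩
    · rintro ⟨⟨x, hx⟩, rfl⟩; exact hx
  have hmap : TensorProduct.map π.toLinearMap π.toLinearMap
      = (LinearMap.lTensor HH' π.toLinearMap).comp (LinearMap.rTensor HH π.toLinearMap) := by
    apply TensorProduct.ext'
    intro x y
    simp
  -- kernel of lTensor on HH' ⊗ HH
  have h1 : Function.Exact (LinearMap.lTensor HH' I.subtype)
      (LinearMap.lTensor HH' π.toLinearMap) :=
    Module.Flat.lTensor_exact HH' hexact
  have h2 : Function.Exact (LinearMap.rTensor HH I.subtype)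
      (LinearMap.rTensor HH π.toLinearMap) :=
    Module.Flat.rTensor_exact HH hexact
  have hk1 : LinearMap.ker (LinearMap.lTensor HH' π.toLinearMap)
      = LinearMap.range (LinearMap.lTensor HH' I.subtype) :=
    (LinearMap.exact_iff.mp h1)
  have hk2 : LinearMap.ker (LinearMap.rTensor HH π.toLinearMap)
      = LinearMap.range (LinearMap.rTensor HH I.subtype) :=
    (LinearMap.exact_iff.mp h2)
  -- range (lTensor HH' I.subtype) = map (rTensor π) (range (lTensor HH I.subtype))
  have hrg : LinearMap.range (LinearMap.lTensor HH' I.subtype)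
      = Submodule.map (LinearMap.rTensor HH π.toLinearMap)
          (LinearMap.range (LinearMap.lTensor HH I.subtype)) := by
    apply le_antisymm
    · rintro _ ⟨z, rfl⟩
      induction z using TensorProduct.induction_on with
      | zero => simp
      | tmul a b =>
          obtain ⟨a', rfl⟩ := hπ a
          exact ⟨a' ⊗ₜ[kk] (b : HH), ⟨a' ⊗ₜ[kk] b, rfl⟩, by simp⟩
      | add a b ha hb =>
          rw [map_add]
          exact Submodule.add_mem _ ha hb
    · rintro _ ⟨_, ⟨z, rfl⟩, rfl⟩
      induction z using TensorProduct.induction_on with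
      | zero => simp
      | tmul a b => exact ⟨π a ⊗ₜ[kk] b, by simp⟩
      | add a b ha hb =>
          rw [map_add, map_add]
          exact Submodule.add_mem _ ha hb
  have : LinearMap.ker (TensorProduct.map π.toLinearMap π.toLinearMap)
      = Submodule.comap (LinearMap.rTensor HH π.toLinearMap)
          (LinearMap.ker (LinearMap.lTensor HH' π.toLinearMap)) := by
    rw [hmap, LinearMap.ker_comp]
  rw [this, hk1, hrg, Submodule.comap_map_eq, hk2, lTensor_range_eq_rightSlice,
    rTensor_range_eq_leftSlice]
  exact sup_comm _ _


lemma slices_mul_right (I : Submodule k H) (hI : IsTwoSidedIdeal I) (y : H) :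
    ∀ z ∈ leftSlice k H I ⊔ rightSlice k H I,
      z * ((1 : H) ⊗ₜ[k] y) ∈ leftSlice k H I ⊔ rightSlice k H I := by
  intro z hz
  obtain ⟨l, hl, r, hr, rfl⟩ := Submodule.mem_sup.mp hz
  rw [add_mul]
  exact Submodule.add_mem _
    (Submodule.mem_sup_left (leftSlice_mul_right I y l hl))
    (Submodule.mem_sup_right (rightSlice_mul_right I hI y r hr))

end HopfHelpers



/-- If `(A,H)` is a left Hopf algebroid and `I` is a two-sided ideal and
two-sided coideal of `H` satisfying the Hopf condition
`β⁻¹(h ⊗ 1) ∈ Im(I ⊗_{A^op} H + H ⊗_{A^op} I)` for all `h ∈ I`, then the quotient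
bialgebroid `(A, H/I)` is again a left Hopf algebroid. -/
theorem statement1
    (k A H H' : Type) [Field k] [Ring A] [Ring H] [Ring H']
    [Algebra k A] [Algebra k H] [Algebra k H']
    (B : LeftBialgebroid k A H) (hB : IsLeftHopf B)
    (I : Submodule k H) (hI : IsTwoSidedIdeal I) (hco : IsCoideal B I)
    (hHopf : HopfIdealCondition B I)
    (π : H →ₐ[k] H') (hπ : Function.Surjective π)
    (hker : ∀ h : H, π h = 0 ↔ h ∈ I) :
    ∀ B' : LeftBialgebroid k A H', IsBialgebroidHom B B' π → IsLeftHopf B' := by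
  intro B' hom
  obtain ⟨hsrc, htgt, hcounit, hcomul⟩ := hom
  set Φ : H ⊗[k] H →ₗ[k] H' ⊗[k] H' := TensorProduct.map π.toLinearMap π.toLinearMap with hΦdef
  have hΦtmul : ∀ x y : H, Φ (x ⊗ₜ[k] y) = π x ⊗ₜ[k] π y := fun x y => rfl
  have hΦmul : ∀ u v : H ⊗[k] H, Φ (u * v) = Φ u * Φ v := fun u v => tensorMap_mul π u v
  have hΦsurj : Function.Surjective Φ :=
    TensorProduct.map_surjective (by exact hπ) (by exact hπ)
  -- Φ maps the balancer into the balancer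
  have hΦbal : ∀ z ∈ balancer k A H B.src B.tgt, Φ z ∈ balancer k A H' B'.src B'.tgt := by
    intro z hz
    refine Submodule.span_induction ?_ ?_ ?_ ?_ hz
    · rintro _ ⟨a, x, y, rfl⟩
      rw [map_sub, hΦtmul, hΦtmul, map_mul, map_mul, htgt, hsrc]
      exact Submodule.subset_span ⟨a, π x, π y, rfl⟩
    · simp
    · intro a b _ _ ha hb; rw [map_add]; exact Submodule.add_mem _ ha hb
    · intro c a _ ha; rw [map_smul]; exact Submodule.smul_mem _ _ ha
  have hΦobal : ∀ z ∈ opBalancer k A H B.tgt, Φ z ∈ opBalancer k A H' B'.tgt := by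
    intro z hz
    refine Submodule.span_induction ?_ ?_ ?_ ?_ hz
    · rintro _ ⟨a, x, y, rfl⟩
      rw [map_sub, hΦtmul, hΦtmul, map_mul, map_mul, htgt]
      exact Submodule.subset_span ⟨a, π x, π y, rfl⟩
    · simp
    · intro a b _ _ ha hb; rw [map_add]; exact Submodule.add_mem _ ha hb
    · intro c a _ ha; rw [map_smul]; exact Submodule.smul_mem _ _ ha
  have hΦbal_onto : balancer k A H' B'.src B'.tgt ≤
      Submodule.map Φ (balancer k A H B.src B.tgt) := by
    rw [balancer, Submodule.span_le]
    rintro _ ⟨a, x', y', rfl⟩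
    obtain ⟨x, rfl⟩ := hπ x'
    obtain ⟨y, rfl⟩ := hπ y'
    refine ⟨(B.tgt a * x) ⊗ₜ[k] y - x ⊗ₜ[k] (B.src a * y),
      Submodule.subset_span ⟨a, x, y, rfl⟩, ?_⟩
    rw [map_sub, hΦtmul, hΦtmul, map_mul, map_mul, htgt, hsrc]
  -- the Galois maps commute with Φ up to the balancer
  have hcomm : ∀ w : H ⊗[k] H,
      Φ (galoisRep k A H B w) - galoisRep k A H' B' (Φ w)
        ∈ balancer k A H' B'.src B'.tgt := by
    intro w
    induction w using TensorProduct.induction_on with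
    | zero => simp
    | tmul x y =>
        have h1 : Φ ((1 : H) ⊗ₜ[k] y) = (1 : H') ⊗ₜ[k] (π y) := by
          rw [hΦtmul, map_one]
        rw [galoisRep_tmul, hΦtmul, galoisRep_tmul, hΦmul, h1, ← sub_mul]
        exact balancer_mul_right _ _ _ _ (hcomul x)
    | add a b ha hb =>
        have h2 := Submodule.add_mem _ ha hb
        have h3 : Φ (galoisRep k A H B (a + b)) - galoisRep k A H' B' (Φ (a + b))
            = (Φ (galoisRep k A H B a) - galoisRep k A H' B' (Φ a))
              + (Φ (galoisRep k A H B b) - galoisRep k A H' B' (Φ b)) := by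
          simp only [map_add]; abel
        rw [h3]; exact h2
  have hkerΦ : LinearMap.ker Φ = leftSlice k H I ⊔ rightSlice k H I :=
    ker_tensorMap k π hπ I hker
  -- descent of the quotient Galois map
  have hdesc : opBalancer k A H' B'.tgt ≤
      (balancer k A H' B'.src B'.tgt).comap (galoisRep k A H' B') := by
    rw [opBalancer, Submodule.span_le]
    rintro _ ⟨a, x', y', rfl⟩
    obtain ⟨x, rfl⟩ := hπ x'
    obtain ⟨y, rfl⟩ := hπ y'
    have h0 : (π x * B'.tgt a) ⊗ₜ[k] (π y) - (π x) ⊗ₜ[k] (B'.tgt a * π y)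
        = Φ ((x * B.tgt a) ⊗ₜ[k] y - x ⊗ₜ[k] (B.tgt a * y)) := by
      rw [map_sub, hΦtmul, hΦtmul, map_mul, map_mul, htgt]
    have hz0 : (x * B.tgt a) ⊗ₜ[k] y - x ⊗ₜ[k] (B.tgt a * y) ∈ opBalancer k A H B.tgt :=
      Submodule.subset_span ⟨a, x, y, rfl⟩
    have h1 : Φ (galoisRep k A H B ((x * B.tgt a) ⊗ₜ[k] y - x ⊗ₜ[k] (B.tgt a * y)))
        ∈ balancer k A H' B'.src B'.tgt := hΦbal _ (hB.descends hz0)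
    rw [SetLike.mem_coe, Submodule.mem_comap, h0]
    have h2 := Submodule.sub_mem _ h1 (hcomm ((x * B.tgt a) ⊗ₜ[k] y - x ⊗ₜ[k] (B.tgt a * y)))
    rw [sub_sub_cancel] at h2
    exact h2
  refine ⟨hdesc, ?_, ?_⟩
  · -- injectivity
    rw [← LinearMap.ker_eq_bot, eq_bot_iff]
    intro u hu
    obtain ⟨w', rfl⟩ := Submodule.Quotient.mk_surjective _ u
    obtain ⟨w, rfl⟩ := hΦsurj w'
    rw [LinearMap.mem_ker, Submodule.mapQ_apply, Submodule.Quotient.mk_eq_zero] at hu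
    -- hu : galoisRep B' (Φ w) ∈ bal'
    have h1 : Φ (galoisRep k A H B w) ∈ balancer k A H' B'.src B'.tgt := by
      have h2 := Submodule.add_mem _ (hcomm w) hu
      rw [sub_add_cancel] at h2
      exact h2
    have hpre : galoisRep k A H B w ∈
        balancer k A H B.src B.tgt ⊔ (leftSlice k H I ⊔ rightSlice k H I) := by
      have hmapeq : Submodule.map Φ (balancer k A H B.src B.tgt)
          = balancer k A H' B'.src B'.tgt :=
        le_antisymm (Submodule.map_le_iff_le_comap.mpr fun z hz => hΦbal z hz) hΦbal_onto
      have hc : Submodule.comap Φ (balancer k A H' B'.src B'.tgt)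
          = balancer k A H B.src B.tgt ⊔ (leftSlice k H I ⊔ rightSlice k H I) := by
        rw [← hmapeq, Submodule.comap_map_eq, hkerΦ]
      rw [← hc, Submodule.mem_comap]
      exact h1
    -- push into the image of the slices under the Galois map
    have hT : balancer k A H B.src B.tgt ⊔ (leftSlice k H I ⊔ rightSlice k H I) ≤
        Submodule.map (galoisRep k A H B)
          (opBalancer k A H B.tgt ⊔ (leftSlice k H I ⊔ rightSlice k H I))
          ⊔ balancer k A H B.src B.tgt := by
      refine sup_le le_sup_right (sup_le ?_ ?_)
      · rw [leftSlice, Submodule.span_le]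
        rintro _ ⟨x, hx, y, rfl⟩
        obtain ⟨w₀, hw₀mem, hw₀⟩ := hHopf x hx
        have hm : w₀ * ((1 : H) ⊗ₜ[k] y) ∈ leftSlice k H I ⊔ rightSlice k H I :=
          slices_mul_right I hI y w₀ hw₀mem
        have hb : galoisRep k A H B (w₀ * ((1 : H) ⊗ₜ[k] y)) - x ⊗ₜ[k] y
            ∈ balancer k A H B.src B.tgt := by
          have := balancer_mul_right B.src B.tgt y _ hw₀
          rw [sub_mul, Algebra.TensorProduct.tmul_mul_tmul, mul_one, one_mul,
            ← galoisRep_mul_right] at this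
          exact this
        refine Submodule.mem_sup.mpr ⟨galoisRep k A H B (w₀ * ((1 : H) ⊗ₜ[k] y)),
          ⟨w₀ * ((1 : H) ⊗ₜ[k] y), Submodule.mem_sup_right hm, rfl⟩,
          -(galoisRep k A H B (w₀ * ((1 : H) ⊗ₜ[k] y)) - x ⊗ₜ[k] y),
          Submodule.neg_mem _ hb, by abel⟩
      · rw [rightSlice, Submodule.span_le]
        rintro _ ⟨y, x, hx, rfl⟩
        obtain ⟨u₀, hu₀⟩ := hB.bijective.2 (Submodule.Quotient.mk (y ⊗ₜ[k] (1 : H)))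
        obtain ⟨v₀, rfl⟩ := Submodule.Quotient.mk_surjective _ u₀
        rw [Submodule.mapQ_apply, Submodule.Quotient.eq] at hu₀
        -- hu₀ : galoisRep B v₀ - y ⊗ 1 ∈ bal
        have hm : v₀ * ((1 : H) ⊗ₜ[k] x) ∈ rightSlice k H I :=
          mul_tmul_mem_rightSlice I hI hx v₀
        have hb : galoisRep k A H B (v₀ * ((1 : H) ⊗ₜ[k] x)) - y ⊗ₜ[k] x
            ∈ balancer k A H B.src B.tgt := by
          have := balancer_mul_right B.src B.tgt x _ hu₀
          rw [sub_mul, Algebra.TensorProduct.tmul_mul_tmul, mul_one, one_mul,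
            ← galoisRep_mul_right] at this
          exact this
        refine Submodule.mem_sup.mpr ⟨galoisRep k A H B (v₀ * ((1 : H) ⊗ₜ[k] x)),
          ⟨v₀ * ((1 : H) ⊗ₜ[k] x),
            Submodule.mem_sup_right (Submodule.mem_sup_right hm), rfl⟩,
          -(galoisRep k A H B (v₀ * ((1 : H) ⊗ₜ[k] x)) - y ⊗ₜ[k] x),
          Submodule.neg_mem _ hb, by abel⟩
    obtain ⟨_, ⟨m, hmmem, rfl⟩, b, hbmem, heq⟩ := Submodule.mem_sup.mp (hT hpre)
    -- heq : β m + b = β w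
    have hqq : Submodule.mapQ (opBalancer k A H B.tgt) (balancer k A H B.src B.tgt)
        (galoisRep k A H B) hB.descends (Submodule.Quotient.mk w)
        = Submodule.mapQ (opBalancer k A H B.tgt) (balancer k A H B.src B.tgt)
        (galoisRep k A H B) hB.descends (Submodule.Quotient.mk m) := by
      rw [Submodule.mapQ_apply, Submodule.mapQ_apply, Submodule.Quotient.eq]
      have hd : galoisRep k A H B w - galoisRep k A H B m = b := by
        rw [← heq]; abel
      rw [hd]; exact hbmem
    have hwm := hB.bijective.1 hqq
    rw [Submodule.Quotient.eq] at hwm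
    have hw : w ∈ opBalancer k A H B.tgt ⊔ (leftSlice k H I ⊔ rightSlice k H I) := by
      have hrepr : w = (w - m) + m := by abel
      rw [hrepr]
      exact Submodule.add_mem _ (Submodule.mem_sup_left hwm) hmmem
    obtain ⟨o, ho, s, hs, rfl⟩ := Submodule.mem_sup.mp hw
    rw [Submodule.mem_bot, Submodule.Quotient.mk_eq_zero, map_add]
    have hΦs : Φ s = 0 := by
      rw [← LinearMap.mem_ker, hkerΦ]; exact hs
    rw [hΦs, add_zero]
    exact hΦobal o ho
  · -- surjectivity
    intro z'
    obtain ⟨v', rfl⟩ := Submodule.Quotient.mk_surjective _ z'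
    obtain ⟨v, rfl⟩ := hΦsurj v'
    obtain ⟨u, hu⟩ := hB.bijective.2 (Submodule.Quotient.mk v)
    obtain ⟨w, rfl⟩ := Submodule.Quotient.mk_surjective _ u
    rw [Submodule.mapQ_apply, Submodule.Quotient.eq] at hu
    refine ⟨Submodule.Quotient.mk (Φ w), ?_⟩
    rw [Submodule.mapQ_apply, Submodule.Quotient.eq]
    have h1 := hcomm w
    have h2 : Φ (galoisRep k A H B w - v) ∈ balancer k A H' B'.src B'.tgt := hΦbal _ hu
    have h3 : galoisRep k A H' B' (Φ w) - Φ v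
        = Φ (galoisRep k A H B w - v)
          - (Φ (galoisRep k A H B w) - galoisRep k A H' B' (Φ w)) := by
      rw [map_sub]; abel
    rw [h3]
    exact Submodule.sub_mem _ h2 h1
end

section
/- Let (A,H) be a left Hopf algebroid and let (J,I) be a Hopf ideal of (A,H) allowing base change, i.e. J ⊆ A and I ⊆ H are two-sided ideals with s(J) ⊆ I, t(J^op) ⊆ I, Δ(I) ⊆ Im(I ⊗_A H + H ⊗_A I), ε(I) ⊆ J, and β^{-1}(h ⊗ 1) ∈ Im(I ⊗_{A^op} H + H ⊗_{A^op} I) for all h ∈ I. Then (A/J, H/I) carries a natural left Hopf algebroid structure. -/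
open TensorProduct

section MyAux

variable {k A H : Type} [CommRing k] [Ring A] [Ring H] [Algebra k A] [Algebra k H]

/-- Right-multiplication stability for spans whose generators are stable under
right multiplication by pure tensors. -/
lemma myaux_span_mul_right {G : Set (H ⊗[k] H)}
    (hG : ∀ g ∈ G, ∀ p q : H, g * (p ⊗ₜ[k] q) ∈ Submodule.span k G)
    {z : H ⊗[k] H} (hz : z ∈ Submodule.span k G) (u : H ⊗[k] H) :
    z * u ∈ Submodule.span k G := by
  induction hz using Submodule.span_induction with
  | mem g hg =>
    induction u using TensorProduct.induction_on with
    | zero => simpa using (Submodule.span k G).zero_mem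
    | tmul p q => exact hG g hg p q
    | add x y hx hy =>
      rw [mul_add]; exact (Submodule.span k G).add_mem hx hy
  | zero => simpa using (Submodule.span k G).zero_mem
  | add x y hx hy hx' hy' =>
    rw [add_mul]; exact (Submodule.span k G).add_mem hx' hy'
  | smul c x hx hx' =>
    rw [smul_mul_assoc]; exact (Submodule.span k G).smul_mem c hx'

lemma myaux_balancer_mul_right (s : A →ₐ[k] H) (t : A →ₗ[k] H)
    {z : H ⊗[k] H} (hz : z ∈ balancer k A H s t) (u : H ⊗[k] H) :
    z * u ∈ balancer k A H s t := by
  refine myaux_span_mul_right ?_ hz u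
  rintro g ⟨a, x, y, rfl⟩ p q
  apply Submodule.subset_span
  refine ⟨a, x * p, y * q, ?_⟩
  rw [sub_mul, Algebra.TensorProduct.tmul_mul_tmul, Algebra.TensorProduct.tmul_mul_tmul,
    mul_assoc, mul_assoc]

lemma myaux_slices_eq_span (I : Submodule k H) :
    leftSlice k H I ⊔ rightSlice k H I =
      Submodule.span k ({z | ∃ x ∈ I, ∃ y : H, z = x ⊗ₜ[k] y} ∪
        {z | ∃ y : H, ∃ x ∈ I, z = y ⊗ₜ[k] x}) := by
  rw [Submodule.span_union]; rfl

lemma myaux_slices_mul_right {I : Submodule k H} (hI : IsTwoSidedIdeal I)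
    {z : H ⊗[k] H} (hz : z ∈ leftSlice k H I ⊔ rightSlice k H I) (u : H ⊗[k] H) :
    z * u ∈ leftSlice k H I ⊔ rightSlice k H I := by
  rw [myaux_slices_eq_span] at hz ⊢
  refine myaux_span_mul_right ?_ hz u
  rintro g (⟨x, hx, y, rfl⟩ | ⟨y, x, hx, rfl⟩) p q <;> apply Submodule.subset_span
  · exact Or.inl ⟨x * p, hI.mul_mem_right p x hx, y * q,
      by rw [Algebra.TensorProduct.tmul_mul_tmul]⟩
  · exact Or.inr ⟨y * p, x * q, hI.mul_mem_right q x hx,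
      by rw [Algebra.TensorProduct.tmul_mul_tmul]⟩

lemma myaux_mul_one_tmul_mem_rightSlice {I : Submodule k H} (hI : IsTwoSidedIdeal I)
    {x : H} (hx : x ∈ I) (u : H ⊗[k] H) :
    u * ((1 : H) ⊗ₜ[k] x) ∈ rightSlice k H I := by
  induction u using TensorProduct.induction_on with
  | zero => simpa using (rightSlice k H I).zero_mem
  | tmul p q =>
    rw [Algebra.TensorProduct.tmul_mul_tmul, mul_one]
    exact Submodule.subset_span ⟨p, q * x, hI.mul_mem_left q x hx, rfl⟩
  | add a b ha hb => rw [add_mul]; exact (rightSlice k H I).add_mem ha hb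

lemma myaux_galoisRep_tmul (B : LeftBialgebroid k A H) (a b : H) :
    galoisRep k A H B (a ⊗ₜ[k] b) = B.comul a * ((1 : H) ⊗ₜ[k] b) := by
  simp [galoisRep]

lemma myaux_galoisRep_mul (B : LeftBialgebroid k A H) (u : H ⊗[k] H) (x : H) :
    galoisRep k A H B (u * ((1 : H) ⊗ₜ[k] x)) = galoisRep k A H B u * ((1 : H) ⊗ₜ[k] x) := by
  induction u using TensorProduct.induction_on with
  | zero => simp
  | tmul a b =>
    rw [Algebra.TensorProduct.tmul_mul_tmul, mul_one, myaux_galoisRep_tmul,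
      myaux_galoisRep_tmul, mul_assoc, Algebra.TensorProduct.tmul_mul_tmul, one_mul]
  | add a b ha hb => rw [add_mul, map_add, map_add, ha, hb, add_mul]

end MyAux

section MyAux2

variable {k A H A' H' : Type} [CommRing k] [Ring A] [Ring H] [Ring A'] [Ring H']
  [Algebra k A] [Algebra k H] [Algebra k A'] [Algebra k H']
variable (πH : H →ₐ[k] H')

/-- `π ⊗ π` as the canonical linear map. -/
noncomputable abbrev myaux_pi2 : H ⊗[k] H →ₗ[k] H' ⊗[k] H' :=
  TensorProduct.map πH.toLinearMap πH.toLinearMap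

lemma myaux_pi2_eq_algMap :
    (myaux_pi2 πH : H ⊗[k] H →ₗ[k] H' ⊗[k] H') =
      (Algebra.TensorProduct.map πH πH).toLinearMap := by
  apply TensorProduct.ext'
  intro a b
  rfl

lemma myaux_pi2_mul (u v : H ⊗[k] H) :
    myaux_pi2 πH (u * v) = myaux_pi2 πH u * myaux_pi2 πH v := by
  rw [myaux_pi2_eq_algMap]
  exact map_mul (Algebra.TensorProduct.map πH πH) u v

variable {πA : A →ₐ[k] A'} {s' : A' →ₐ[k] H'} {t' : A' →ₗ[k] H'}
variable (B : LeftBialgebroid k A H)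

lemma myaux_map_balancer_le
    (hs : ∀ a : A, πH (B.src a) = s' (πA a)) (ht : ∀ a : A, πH (B.tgt a) = t' (πA a))
    {z : H ⊗[k] H} (hz : z ∈ balancer k A H B.src B.tgt) :
    myaux_pi2 πH z ∈ balancer k A' H' s' t' := by
  induction hz using Submodule.span_induction with
  | mem g hg =>
    obtain ⟨a, x, y, rfl⟩ := hg
    apply Submodule.subset_span
    refine ⟨πA a, πH x, πH y, ?_⟩
    simp [map_mul, hs, ht]
  | zero => simp
  | add x y hx hy hx' hy' => rw [map_add]; exact Submodule.add_mem _ hx' hy'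
  | smul c x hx hx' => rw [map_smul]; exact Submodule.smul_mem _ c hx'

lemma myaux_balancer'_le_map
    (hπA : Function.Surjective πA) (hπH : Function.Surjective πH)
    (hs : ∀ a : A, πH (B.src a) = s' (πA a)) (ht : ∀ a : A, πH (B.tgt a) = t' (πA a)) :
    balancer k A' H' s' t' ≤ Submodule.map (myaux_pi2 πH) (balancer k A H B.src B.tgt) := by
  rw [balancer]
  rw [Submodule.span_le]
  rintro g ⟨a', x', y', rfl⟩
  obtain ⟨a, rfl⟩ := hπA a'
  obtain ⟨x, rfl⟩ := hπH x'
  obtain ⟨y, rfl⟩ := hπH y'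
  refine ⟨(B.tgt a * x) ⊗ₜ[k] y - x ⊗ₜ[k] (B.src a * y),
    Submodule.subset_span ⟨a, x, y, rfl⟩, ?_⟩
  simp [map_mul, hs, ht]

lemma myaux_map_opBalancer_le (ht : ∀ a : A, πH (B.tgt a) = t' (πA a))
    {z : H ⊗[k] H} (hz : z ∈ opBalancer k A H B.tgt) :
    myaux_pi2 πH z ∈ opBalancer k A' H' t' := by
  induction hz using Submodule.span_induction with
  | mem g hg =>
    obtain ⟨a, x, y, rfl⟩ := hg
    apply Submodule.subset_span
    refine ⟨πA a, πH x, πH y, ?_⟩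
    simp [map_mul, ht]
  | zero => simp
  | add x y hx hy hx' hy' => rw [map_add]; exact Submodule.add_mem _ hx' hy'
  | smul c x hx hx' => rw [map_smul]; exact Submodule.smul_mem _ c hx'

lemma myaux_opBalancer'_le_map
    (hπA : Function.Surjective πA) (hπH : Function.Surjective πH)
    (ht : ∀ a : A, πH (B.tgt a) = t' (πA a)) :
    opBalancer k A' H' t' ≤ Submodule.map (myaux_pi2 πH) (opBalancer k A H B.tgt) := by
  rw [opBalancer, Submodule.span_le]
  rintro g ⟨a', x', y', rfl⟩
  obtain ⟨a, rfl⟩ := hπA a'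
  obtain ⟨x, rfl⟩ := hπH x'
  obtain ⟨y, rfl⟩ := hπH y'
  refine ⟨(x * B.tgt a) ⊗ₜ[k] y - x ⊗ₜ[k] (B.tgt a * y),
    Submodule.subset_span ⟨a, x, y, rfl⟩, ?_⟩
  simp [map_mul, ht]

lemma myaux_map_balancer3_le
    (hs : ∀ a : A, πH (B.src a) = s' (πA a)) (ht : ∀ a : A, πH (B.tgt a) = t' (πA a))
    {z : H ⊗[k] (H ⊗[k] H)} (hz : z ∈ balancer3 k A H B.src B.tgt) :
    (TensorProduct.map πH.toLinearMap (myaux_pi2 πH)) z ∈ balancer3 k A' H' s' t' := by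
  induction hz using Submodule.span_induction with
  | mem g hg =>
    apply Submodule.subset_span
    obtain (⟨a, x, y, w, rfl⟩ | ⟨a, x, y, w, rfl⟩) := hg
    · exact Or.inl ⟨πA a, πH x, πH y, πH w, by simp [map_mul, hs, ht]⟩
    · exact Or.inr ⟨πA a, πH x, πH y, πH w, by simp [map_mul, hs, ht]⟩
  | zero => simp
  | add x y hx hy hx' hy' => rw [map_add]; exact Submodule.add_mem _ hx' hy'
  | smul c x hx hx' => rw [map_smul]; exact Submodule.smul_mem _ c hx'

lemma myaux_pi2_leftSlice {I : Submodule k H} (hI : ∀ h ∈ I, πH h = 0)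
    {z : H ⊗[k] H} (hz : z ∈ leftSlice k H I) : myaux_pi2 πH z = 0 := by
  induction hz using Submodule.span_induction with
  | mem g hg => obtain ⟨x, hx, y, rfl⟩ := hg; simp [hI x hx]
  | zero => simp
  | add x y hx hy hx' hy' => rw [map_add, hx', hy', add_zero]
  | smul c x hx hx' => rw [map_smul, hx', smul_zero]

lemma myaux_pi2_rightSlice {I : Submodule k H} (hI : ∀ h ∈ I, πH h = 0)
    {z : H ⊗[k] H} (hz : z ∈ rightSlice k H I) : myaux_pi2 πH z = 0 := by
  induction hz using Submodule.span_induction with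
  | mem g hg => obtain ⟨y, x, hx, rfl⟩ := hg; simp [hI x hx]
  | zero => simp
  | add x y hx hy hx' hy' => rw [map_add, hx', hy', add_zero]
  | smul c x hx hx' => rw [map_smul, hx', smul_zero]

lemma myaux_pi2_slices {I : Submodule k H} (hI : ∀ h ∈ I, πH h = 0)
    {z : H ⊗[k] H} (hz : z ∈ leftSlice k H I ⊔ rightSlice k H I) : myaux_pi2 πH z = 0 := by
  obtain ⟨u, hu, v, hv, rfl⟩ := Submodule.mem_sup.mp hz
  rw [map_add, myaux_pi2_leftSlice πH hI hu, myaux_pi2_rightSlice πH hI hv, add_zero]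

lemma myaux_ker_pi2 (hπH : Function.Surjective πH) {I : Submodule k H}
    (hker : ∀ h : H, πH h = 0 ↔ h ∈ I)
    {z : H ⊗[k] H} (hz : myaux_pi2 πH z = 0) :
    z ∈ leftSlice k H I ⊔ rightSlice k H I := by
  have hexact : Function.Exact I.subtype πH.toLinearMap := by
    intro y
    constructor
    · intro hy
      exact ⟨⟨y, (hker y).mp hy⟩, rfl⟩
    · rintro ⟨⟨x, hx⟩, rfl⟩
      exact (hker x).mpr hx
  have hk := TensorProduct.map_ker hexact hπH hexact hπH
  have hzmem : z ∈ LinearMap.ker (TensorProduct.map πH.toLinearMap πH.toLinearMap) := hz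
  rw [hk] at hzmem
  obtain ⟨u, hu, v, hv, rfl⟩ := Submodule.mem_sup.mp hzmem
  clear hz hzmem
  apply Submodule.add_mem
  · apply Submodule.mem_sup_right
    obtain ⟨w, rfl⟩ := hu
    clear hv
    induction w using TensorProduct.induction_on with
    | zero => simp
    | tmul p q =>
      simp only [LinearMap.lTensor_tmul]
      exact Submodule.subset_span ⟨p, q.1, q.2, rfl⟩
    | add a b ha hb => rw [map_add]; exact Submodule.add_mem _ ha hb
  · apply Submodule.mem_sup_left
    obtain ⟨w, rfl⟩ := hv
    clear hu
    induction w using TensorProduct.induction_on with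
    | zero => simp
    | tmul p q =>
      simp only [LinearMap.rTensor_tmul]
      exact Submodule.subset_span ⟨p.1, p.2, q, rfl⟩
    | add a b ha hb => rw [map_add]; exact Submodule.add_mem _ ha hb

end MyAux2

section MyAux3

variable {k A H : Type} [CommRing k] [Ring A] [Ring H] [Algebra k A] [Algebra k H]
variable {s : A →ₐ[k] H} {t : A →ₗ[k] H}

lemma myaux_assoc_tmul_balancer3 {z : H ⊗[k] H} (hz : z ∈ balancer k A H s t) (c : H) :
    (TensorProduct.assoc k H H H) (z ⊗ₜ[k] c) ∈ balancer3 k A H s t := by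
  induction hz using Submodule.span_induction with
  | mem g hg =>
    obtain ⟨a, x, y, rfl⟩ := hg
    apply Submodule.subset_span
    refine Or.inl ⟨a, x, y, c, ?_⟩
    rw [TensorProduct.sub_tmul, map_sub]
    rfl
  | zero => simp
  | add x y hx hy hx' hy' =>
    rw [TensorProduct.add_tmul, map_add]; exact Submodule.add_mem _ hx' hy'
  | smul r x hx hx' =>
    rw [← TensorProduct.smul_tmul', map_smul]; exact Submodule.smul_mem _ r hx'

lemma myaux_tmul_balancer3 {z : H ⊗[k] H} (hz : z ∈ balancer k A H s t) (c : H) :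
    c ⊗ₜ[k] z ∈ balancer3 k A H s t := by
  induction hz using Submodule.span_induction with
  | mem g hg =>
    obtain ⟨a, x, y, rfl⟩ := hg
    apply Submodule.subset_span
    refine Or.inr ⟨a, c, x, y, ?_⟩
    rw [TensorProduct.tmul_sub]
  | zero => simp
  | add x y hx hy hx' hy' =>
    rw [TensorProduct.tmul_add]; exact Submodule.add_mem _ hx' hy'
  | smul r x hx hx' =>
    rw [TensorProduct.tmul_smul]; exact Submodule.smul_mem _ r hx'

lemma myaux_balancer_map_mulLeft (hcomm : ∀ a b : A, s a * t b = t b * s a)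
    (u v : A) {z : H ⊗[k] H} (hz : z ∈ balancer k A H s t) :
    (TensorProduct.map (LinearMap.mulLeft k (s u)) (LinearMap.mulLeft k (t v))) z
      ∈ balancer k A H s t := by
  induction hz using Submodule.span_induction with
  | mem g hg =>
    obtain ⟨a, x, y, rfl⟩ := hg
    apply Submodule.subset_span
    refine ⟨a, s u * x, t v * y, ?_⟩
    rw [map_sub, TensorProduct.map_tmul, TensorProduct.map_tmul]
    simp only [LinearMap.mulLeft_apply]
    rw [show s u * (t a * x) = t a * (s u * x) by
        rw [← mul_assoc, hcomm, mul_assoc],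
      show t v * (s a * y) = s a * (t v * y) by
        rw [← mul_assoc, ← hcomm, mul_assoc]]
  | zero => simp
  | add x y hx hy hx' hy' => rw [map_add]; exact Submodule.add_mem _ hx' hy'
  | smul r x hx hx' => rw [map_smul]; exact Submodule.smul_mem _ r hx'

end MyAux3

/-- A morphism of left bialgebroids over a base change `πA : A → A'`. -/
def IsBialgebroidHomOver (k A H A' H' : Type) [CommRing k] [Ring A] [Ring H] [Ring A']
    [Ring H'] [Algebra k A] [Algebra k H] [Algebra k A'] [Algebra k H']
    (B : LeftBialgebroid k A H) (B' : LeftBialgebroid k A' H')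
    (πA : A →ₐ[k] A') (πH : H →ₐ[k] H') : Prop :=
  (∀ a : A, πH (B.src a) = B'.src (πA a)) ∧ (∀ a : A, πH (B.tgt a) = B'.tgt (πA a)) ∧
  (∀ h : H, B'.counit (πH h) = πA (B.counit h)) ∧
  (∀ h : H, (TensorProduct.map πH.toLinearMap πH.toLinearMap) (B.comul h) - B'.comul (πH h)
      ∈ balancer k A' H' B'.src B'.tgt)

set_option maxHeartbeats 2000000 in
set_option synthInstance.maxHeartbeats 200000 in
/-- If `(J,I)` is a Hopf ideal (with base change) of a left Hopf
algebroid `(A,H)`, then `(A/J, H/I)` carries a natural left Hopf algebroid structure. -/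
theorem statement4
    (k A H A' H' : Type) [Field k] [Ring A] [Ring H] [Ring A'] [Ring H']
    [Algebra k A] [Algebra k H] [Algebra k A'] [Algebra k H']
    (B : LeftBialgebroid k A H) (hB : IsLeftHopf B)
    (J : Submodule k A) (I : Submodule k H) (hJI : IsHopfIdealPair B J I)
    (πA : A →ₐ[k] A') (hπA : Function.Surjective πA)
    (hkerA : ∀ a : A, πA a = 0 ↔ a ∈ J)
    (πH : H →ₐ[k] H') (hπH : Function.Surjective πH)
    (hkerH : ∀ h : H, πH h = 0 ↔ h ∈ I) :
    ∃ B' : LeftBialgebroid k A' H',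
      IsBialgebroidHomOver k A H A' H' B B' πA πH ∧ IsLeftHopf B' := by
  classical
  -- choose linear sections of the projections
  obtain ⟨σA, hσA⟩ := πA.toLinearMap.exists_rightInverse_of_surjective
    (LinearMap.range_eq_top.mpr hπA)
  obtain ⟨σH, hσH⟩ := πH.toLinearMap.exists_rightInverse_of_surjective
    (LinearMap.range_eq_top.mpr hπH)
  have hσA' : ∀ a' : A', πA (σA a') = a' := fun a' => LinearMap.congr_fun hσA a'
  have hσH' : ∀ h' : H', πH (σH h') = h' := fun h' => LinearMap.congr_fun hσH h'
  have hJ : ∀ a b : A, πA a = πA b → a - b ∈ J := fun a b h =>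
    (hkerA _).mp (by rw [map_sub, h, sub_self])
  have hI : ∀ x y : H, πH x = πH y → x - y ∈ I := fun x y h =>
    (hkerH _).mp (by rw [map_sub, h, sub_self])
  have hIzero : ∀ h ∈ I, πH h = 0 := fun h hh => (hkerH h).mpr hh
  -- well-definedness transfers
  have hsrcwd : ∀ x y : A, πA x = πA y → πH (B.src x) = πH (B.src y) := by
    intro x y h
    have h2 : B.src x - B.src y ∈ I := by
      rw [← map_sub]; exact hJI.src_mem _ (hJ x y h)
    have h3 := (hkerH _).mpr h2
    rw [map_sub, sub_eq_zero] at h3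
    exact h3
  have htgtwd : ∀ x y : A, πA x = πA y → πH (B.tgt x) = πH (B.tgt y) := by
    intro x y h
    have h2 : B.tgt x - B.tgt y ∈ I := by
      rw [← map_sub]; exact hJI.tgt_mem _ (hJ x y h)
    have h3 := (hkerH _).mpr h2
    rw [map_sub, sub_eq_zero] at h3
    exact h3
  have hcounitwd : ∀ x y : H, πH x = πH y → πA (B.counit x) = πA (B.counit y) := by
    intro x y h
    have h2 : B.counit x - B.counit y ∈ J := by
      rw [← map_sub]; exact hJI.counit_mem _ (hI x y h)
    have h3 := (hkerA _).mpr h2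
    rw [map_sub, sub_eq_zero] at h3
    exact h3
  -- the quotient structure maps
  let src' : A' →ₐ[k] H' :=
  { toFun := fun a' => πH (B.src (σA a'))
    map_one' := by
      show πH (B.src (σA 1)) = 1
      rw [hsrcwd (σA 1) 1 (by rw [hσA', map_one]), map_one, map_one]
    map_mul' := fun x y => by
      show πH (B.src (σA (x * y))) = πH (B.src (σA x)) * πH (B.src (σA y))
      rw [hsrcwd (σA (x * y)) (σA x * σA y) (by rw [hσA', map_mul, hσA', hσA']),
        map_mul, map_mul]
    map_zero' := by
      show πH (B.src (σA 0)) = 0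
      rw [map_zero, map_zero, map_zero]
    map_add' := fun x y => by
      show πH (B.src (σA (x + y))) = πH (B.src (σA x)) + πH (B.src (σA y))
      rw [map_add, map_add, map_add]
    commutes' := fun c => by
      show πH (B.src (σA ((algebraMap k A') c))) = (algebraMap k H') c
      rw [hsrcwd (σA ((algebraMap k A') c)) ((algebraMap k A) c)
        (by rw [hσA', AlgHom.commutes]), AlgHom.commutes, AlgHom.commutes] }
  let tgt' : A' →ₗ[k] H' := πH.toLinearMap ∘ₗ B.tgt ∘ₗ σA
  let counit' : H' →ₗ[k] A' := πA.toLinearMap ∘ₗ B.counit ∘ₗ σH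
  let comul' : H' →ₗ[k] H' ⊗[k] H' := (myaux_pi2 πH) ∘ₗ B.comul ∘ₗ σH
  -- compatibility lemmas
  have hsrc : ∀ a : A, πH (B.src a) = src' (πA a) := fun a =>
    (hsrcwd (σA (πA a)) a (hσA' (πA a))).symm
  have htgt : ∀ a : A, πH (B.tgt a) = tgt' (πA a) := fun a =>
    (htgtwd (σA (πA a)) a (hσA' (πA a))).symm
  have hcounit : ∀ h : H, counit' (πH h) = πA (B.counit h) := fun h =>
    hcounitwd (σH (πH h)) h (hσH' (πH h))
  have hcomul : ∀ h : H,
      comul' (πH h) - myaux_pi2 πH (B.comul h) ∈ balancer k A' H' src' tgt' := by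
    intro h
    have hmem : σH (πH h) - h ∈ I := hI _ _ (by rw [hσH'])
    obtain ⟨u, hu, b, hb, huv⟩ := Submodule.mem_sup.mp (hJI.comul_mem _ hmem)
    have e : comul' (πH h) - myaux_pi2 πH (B.comul h)
        = myaux_pi2 πH (B.comul (σH (πH h) - h)) := by
      show myaux_pi2 πH (B.comul (σH (πH h))) - myaux_pi2 πH (B.comul h) = _
      rw [map_sub, map_sub]
    rw [e, ← huv, map_add, myaux_pi2_slices πH hIzero hu, zero_add]
    exact myaux_map_balancer_le πH B hsrc htgt hb
  have hcomm' : ∀ a b : A', src' a * tgt' b = tgt' b * src' a := by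
    intro a' b'
    obtain ⟨a, rfl⟩ := hπA a'
    obtain ⟨b, rfl⟩ := hπA b'
    rw [← hsrc, ← htgt, ← map_mul, ← map_mul, B.src_tgt_comm]
  have hbalmap : ∀ {z : H ⊗[k] H}, z ∈ balancer k A H B.src B.tgt →
      myaux_pi2 πH z ∈ balancer k A' H' src' tgt' :=
    fun hz => myaux_map_balancer_le πH B hsrc htgt hz
  -- the quotient bialgebroid
  let B' : LeftBialgebroid k A' H' :=
  { src := src'
    tgt := tgt'
    tgt_one := by
      rw [show (1 : A') = πA 1 from (map_one πA).symm, ← htgt, B.tgt_one, map_one]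
    tgt_mul := by
      intro a' b'
      obtain ⟨a, rfl⟩ := hπA a'
      obtain ⟨b, rfl⟩ := hπA b'
      rw [← map_mul, ← htgt, ← htgt, ← htgt, B.tgt_mul, map_mul]
    src_tgt_comm := hcomm'
    comul := comul'
    counit := counit'
    counit_one := by
      rw [show (1 : H') = πH 1 from (map_one πH).symm, hcounit, B.counit_one, map_one]
    counit_src := by
      intro a' h'
      obtain ⟨a, rfl⟩ := hπA a'
      obtain ⟨h, rfl⟩ := hπH h'
      rw [← hsrc, ← map_mul, hcounit, hcounit, B.counit_src, map_mul]
    counit_tgt := by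
      intro a' h'
      obtain ⟨a, rfl⟩ := hπA a'
      obtain ⟨h, rfl⟩ := hπH h'
      rw [← htgt, ← map_mul, hcounit, hcounit, B.counit_tgt, map_mul]
    counit_mul := by
      intro g' h'
      obtain ⟨g, rfl⟩ := hπH g'
      obtain ⟨h, rfl⟩ := hπH h'
      rw [← map_mul, hcounit, B.counit_mul, hcounit, ← hsrc, ← map_mul, hcounit]
    comul_one := by
      have h1 := hcomul 1
      have h2 : myaux_pi2 πH (B.comul 1 - (1 : H) ⊗ₜ[k] (1 : H))
          ∈ balancer k A' H' src' tgt' := hbalmap B.comul_one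
      rw [map_sub] at h2
      have h4 := Submodule.add_mem _ h1 h2
      rw [sub_add_sub_cancel] at h4
      have h3 : myaux_pi2 πH ((1 : H) ⊗ₜ[k] (1 : H)) = (1 : H') ⊗ₜ[k] (1 : H') := by
        simp
      rw [h3, map_one πH] at h4
      exact h4
    comul_mul := by
      intro g' h'
      have e1 : comul' g' = myaux_pi2 πH (B.comul (σH g')) := rfl
      have e2 : comul' h' = myaux_pi2 πH (B.comul (σH h')) := rfl
      have h1 : g' * h' = πH (σH g' * σH h') := by rw [map_mul, hσH', hσH']
      have h2 := hcomul (σH g' * σH h')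
      have h3 : myaux_pi2 πH (B.comul (σH g' * σH h') - B.comul (σH g') * B.comul (σH h'))
          ∈ balancer k A' H' src' tgt' := hbalmap (B.comul_mul _ _)
      rw [map_sub, myaux_pi2_mul] at h3
      have h4 := Submodule.add_mem _ h2 h3
      rw [sub_add_sub_cancel] at h4
      rw [h1, e1, e2]
      exact h4
    comul_bimod := by
      intro a' b' h'
      obtain ⟨a, rfl⟩ := hπA a'
      obtain ⟨b, rfl⟩ := hπA b'
      have key : src' (πA a) * (tgt' (πA b) * πH (σH h')) =
          πH (B.src a * (B.tgt b * σH h')) := by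
        rw [map_mul, map_mul, hsrc, htgt]
      have hcommute : ∀ z : H ⊗[k] H,
          myaux_pi2 πH ((TensorProduct.map (LinearMap.mulLeft k (B.src a))
            (LinearMap.mulLeft k (B.tgt b))) z) =
          (TensorProduct.map (LinearMap.mulLeft k (src' (πA a)))
            (LinearMap.mulLeft k (tgt' (πA b)))) (myaux_pi2 πH z) := by
        intro z
        induction z using TensorProduct.induction_on with
        | zero => simp
        | tmul x y =>
          show (πH (B.src a * x)) ⊗ₜ[k] (πH (B.tgt b * y)) =
            (src' (πA a) * πH x) ⊗ₜ[k] (tgt' (πA b) * πH y)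
          rw [map_mul, map_mul, hsrc, htgt]
        | add u v hu hv => simp only [map_add, hu, hv]
      have h2 := hcomul (B.src a * (B.tgt b * σH h'))
      have h3 : myaux_pi2 πH (B.comul (B.src a * (B.tgt b * σH h')) -
          (TensorProduct.map (LinearMap.mulLeft k (B.src a))
            (LinearMap.mulLeft k (B.tgt b))) (B.comul (σH h')))
          ∈ balancer k A' H' src' tgt' := hbalmap (B.comul_bimod a b _)
      rw [map_sub, hcommute] at h3
      have h4 := Submodule.add_mem _ h2 h3
      rw [sub_add_sub_cancel] at h4
      have e2 : comul' h' = myaux_pi2 πH (B.comul (σH h')) := rfl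
      rw [show πH (σH h') = h' from hσH' h'] at key
      rw [key, e2]
      exact h4
    comul_coassoc := by
      intro h'
      have hA : ∀ z : H ⊗[k] H,
          (TensorProduct.assoc k H' H' H') ((LinearMap.rTensor H' comul')
            (myaux_pi2 πH z)) -
          (TensorProduct.map πH.toLinearMap (myaux_pi2 πH))
            ((TensorProduct.assoc k H H H) ((LinearMap.rTensor H B.comul) z))
          ∈ balancer3 k A' H' src' tgt' := by
        intro z
        induction z using TensorProduct.induction_on with
        | zero => simp
        | tmul p q =>
          have e : ∀ X : H ⊗[k] H,
              (TensorProduct.assoc k H' H' H') ((myaux_pi2 πH X) ⊗ₜ[k] (πH q)) =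
              (TensorProduct.map πH.toLinearMap (myaux_pi2 πH))
                ((TensorProduct.assoc k H H H) (X ⊗ₜ[k] q)) := by
            intro X
            induction X using TensorProduct.induction_on with
            | zero =>
              simp only [map_zero, TensorProduct.zero_tmul, LinearEquiv.map_zero]
            | tmul u v => rfl
            | add u v hu hv =>
              simp only [map_add, TensorProduct.add_tmul, LinearEquiv.map_add, hu, hv]
          have hD := hcomul p
          have stepone : (LinearMap.rTensor H' comul') (myaux_pi2 πH (p ⊗ₜ[k] q)) =
              (comul' (πH p)) ⊗ₜ[k] (πH q) := rfl
          have steptwo : (LinearMap.rTensor H B.comul) (p ⊗ₜ[k] q) =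
              (B.comul p) ⊗ₜ[k] q := rfl
          rw [stepone, steptwo, show comul' (πH p) =
            (comul' (πH p) - myaux_pi2 πH (B.comul p)) + myaux_pi2 πH (B.comul p) by abel,
            TensorProduct.add_tmul, map_add, e]
          have h5 := myaux_assoc_tmul_balancer3 hD (πH q)
          convert h5 using 1
          abel
        | add u v hu hv =>
          simp only [map_add]
          convert Submodule.add_mem _ hu hv using 1
          abel
      have hBB : ∀ z : H ⊗[k] H,
          (LinearMap.lTensor H' comul') (myaux_pi2 πH z) -
          (TensorProduct.map πH.toLinearMap (myaux_pi2 πH))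
            ((LinearMap.lTensor H B.comul) z)
          ∈ balancer3 k A' H' src' tgt' := by
        intro z
        induction z using TensorProduct.induction_on with
        | zero => simp
        | tmul p q =>
          have hD := hcomul q
          have stepone : (LinearMap.lTensor H' comul') (myaux_pi2 πH (p ⊗ₜ[k] q)) =
              (πH p) ⊗ₜ[k] (comul' (πH q)) := rfl
          have steptwo : (TensorProduct.map πH.toLinearMap (myaux_pi2 πH))
              ((LinearMap.lTensor H B.comul) (p ⊗ₜ[k] q)) =
              (πH p) ⊗ₜ[k] (myaux_pi2 πH (B.comul q)) := rfl
          rw [stepone, steptwo, ← TensorProduct.tmul_sub]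
          exact myaux_tmul_balancer3 hD (πH p)
        | add u v hu hv =>
          simp only [map_add]
          convert Submodule.add_mem _ hu hv using 1
          abel
      have E1 := hA (B.comul (σH h'))
      have E2 := hBB (B.comul (σH h'))
      have E3 : (TensorProduct.map πH.toLinearMap (myaux_pi2 πH))
          ((TensorProduct.assoc k H H H) ((LinearMap.rTensor H B.comul) (B.comul (σH h'))) -
           (LinearMap.lTensor H B.comul) (B.comul (σH h')))
          ∈ balancer3 k A' H' src' tgt' :=
        myaux_map_balancer3_le πH B hsrc htgt (B.comul_coassoc (σH h'))
      rw [map_sub] at E3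
      have e1 : comul' h' = myaux_pi2 πH (B.comul (σH h')) := rfl
      rw [e1]
      have h5 := Submodule.add_mem _ (Submodule.sub_mem _ E1 E2) E3
      convert h5 using 1
      abel
    comul_counit_left := by
      intro h'
      have e : ∀ z : H ⊗[k] H,
          (LinearMap.mul' k H') ((LinearMap.rTensor H'
            (src'.toLinearMap ∘ₗ counit')) (myaux_pi2 πH z)) =
          πH ((LinearMap.mul' k H) ((LinearMap.rTensor H
            (B.src.toLinearMap ∘ₗ B.counit)) z)) := by
        intro z
        induction z using TensorProduct.induction_on with
        | zero => simp
        | tmul p q =>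
          simp only [LinearMap.rTensor_tmul, LinearMap.coe_comp, Function.comp_apply,
            LinearMap.mul'_apply, AlgHom.toLinearMap_apply,
            TensorProduct.map_tmul]
          rw [hcounit, ← hsrc, ← map_mul]
        | add u v hu hv => simp only [map_add, hu, hv]
      have e1 : comul' h' = myaux_pi2 πH (B.comul (σH h')) := rfl
      rw [e1, e, B.comul_counit_left, hσH']
    comul_counit_right := by
      intro h'
      have ecomm : ∀ z : H ⊗[k] H,
          (TensorProduct.comm k H' H') (myaux_pi2 πH z) =
          myaux_pi2 πH ((TensorProduct.comm k H H) z) := by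
        intro z
        induction z using TensorProduct.induction_on with
        | zero => simp
        | tmul p q => rfl
        | add u v hu hv => simp only [map_add, hu, hv]
      have e : ∀ z : H ⊗[k] H,
          (LinearMap.mul' k H') ((LinearMap.rTensor H'
            (tgt' ∘ₗ counit')) (myaux_pi2 πH z)) =
          πH ((LinearMap.mul' k H) ((LinearMap.rTensor H
            (B.tgt ∘ₗ B.counit)) z)) := by
        intro z
        induction z using TensorProduct.induction_on with
        | zero => simp
        | tmul p q =>
          simp only [LinearMap.rTensor_tmul, LinearMap.coe_comp, Function.comp_apply,
            LinearMap.mul'_apply, AlgHom.toLinearMap_apply, TensorProduct.map_tmul]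
          rw [hcounit, ← htgt, ← map_mul]
        | add u v hu hv => simp only [map_add, hu, hv]
      have e1 : comul' h' = myaux_pi2 πH (B.comul (σH h')) := rfl
      rw [e1, ecomm, e, B.comul_counit_right, hσH'] }
  -- identification of the fields of B'
  have hB'src : B'.src = src' := rfl
  have hB'tgt : B'.tgt = tgt' := rfl
  have hB'comul : B'.comul = comul' := rfl
  have hB'counit : B'.counit = counit' := rfl
  refine ⟨B', ⟨fun a => hsrc a, fun a => htgt a, fun h => hcounit h, fun h => ?_⟩, ?_⟩
  · -- comul compatibility for the morphism
    have := hcomul h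
    rw [← neg_sub]
    exact Submodule.neg_mem _ this
  -- now the left Hopf property
  have hβ : ∀ z : H ⊗[k] H,
      galoisRep k A' H' B' (myaux_pi2 πH z) - myaux_pi2 πH (galoisRep k A H B z)
        ∈ balancer k A' H' src' tgt' := by
    intro z
    induction z using TensorProduct.induction_on with
    | zero => simp
    | tmul a b =>
      have e0 : myaux_pi2 πH (a ⊗ₜ[k] b) = (πH a) ⊗ₜ[k] (πH b) := rfl
      rw [e0, myaux_galoisRep_tmul, myaux_galoisRep_tmul, hB'comul]
      have e : myaux_pi2 πH (B.comul a * ((1 : H) ⊗ₜ[k] b)) =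
          myaux_pi2 πH (B.comul a) * ((1 : H') ⊗ₜ[k] (πH b)) := by
        rw [myaux_pi2_mul]
        congr 1
        show (πH 1) ⊗ₜ[k] (πH b) = _
        rw [map_one]
      rw [e, ← sub_mul]
      exact myaux_balancer_mul_right src' tgt' (hcomul a) _
    | add u v hu hv =>
      simp only [map_add]
      convert Submodule.add_mem _ hu hv using 1
      abel
  have hπ2surj : ∀ z' : H' ⊗[k] H', ∃ z : H ⊗[k] H, myaux_pi2 πH z = z' := by
    intro z'
    induction z' using TensorProduct.induction_on with
    | zero => exact ⟨0, map_zero _⟩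
    | tmul a' b' =>
      obtain ⟨a, rfl⟩ := hπH a'
      obtain ⟨b, rfl⟩ := hπH b'
      exact ⟨a ⊗ₜ[k] b, rfl⟩
    | add u v hu hv =>
      obtain ⟨zu, rfl⟩ := hu
      obtain ⟨zv, rfl⟩ := hv
      exact ⟨zu + zv, map_add _ _ _⟩
  -- the extension of the Hopf ideal condition to all slice elements
  have hext : ∀ m ∈ leftSlice k H I ⊔ rightSlice k H I,
      ∃ w₀ ∈ leftSlice k H I ⊔ rightSlice k H I,
        galoisRep k A H B w₀ - m ∈ balancer k A H B.src B.tgt := by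
    intro m hm
    rw [myaux_slices_eq_span] at hm
    induction hm using Submodule.span_induction with
    | mem g hg =>
      rcases hg with ⟨x, hx, y, rfl⟩ | ⟨y, x, hx, rfl⟩
      · obtain ⟨w, hw, hwβ⟩ := hJI.hopf x hx
        refine ⟨w * ((1 : H) ⊗ₜ[k] y), myaux_slices_mul_right hJI.idealI hw _, ?_⟩
        rw [myaux_galoisRep_mul]
        have e : galoisRep k A H B w * ((1 : H) ⊗ₜ[k] y) - x ⊗ₜ[k] y =
            (galoisRep k A H B w - x ⊗ₜ[k] (1 : H)) * ((1 : H) ⊗ₜ[k] y) := by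
          rw [sub_mul, Algebra.TensorProduct.tmul_mul_tmul, mul_one, one_mul]
        rw [e]
        exact myaux_balancer_mul_right B.src B.tgt hwβ _
      · obtain ⟨q, hq⟩ := hB.bijective.2 (Submodule.Quotient.mk (y ⊗ₜ[k] (1 : H)))
        obtain ⟨u, rfl⟩ := Submodule.Quotient.mk_surjective _ q
        rw [Submodule.mapQ_apply] at hq
        have hu : galoisRep k A H B u - y ⊗ₜ[k] (1 : H)
            ∈ balancer k A H B.src B.tgt := (Submodule.Quotient.eq _).mp hq
        refine ⟨u * ((1 : H) ⊗ₜ[k] x),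
          Submodule.mem_sup_right (myaux_mul_one_tmul_mem_rightSlice hJI.idealI hx u), ?_⟩
        rw [myaux_galoisRep_mul]
        have e : galoisRep k A H B u * ((1 : H) ⊗ₜ[k] x) - y ⊗ₜ[k] x =
            (galoisRep k A H B u - y ⊗ₜ[k] (1 : H)) * ((1 : H) ⊗ₜ[k] x) := by
          rw [sub_mul, Algebra.TensorProduct.tmul_mul_tmul, mul_one, one_mul]
        rw [e]
        exact myaux_balancer_mul_right B.src B.tgt hu _
    | zero => exact ⟨0, Submodule.zero_mem _, by simp⟩
    | add m n hm hn ihm ihn =>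
      obtain ⟨w1, hw1, h1⟩ := ihm
      obtain ⟨w2, hw2, h2⟩ := ihn
      refine ⟨w1 + w2, Submodule.add_mem _ hw1 hw2, ?_⟩
      rw [map_add]
      convert Submodule.add_mem _ h1 h2 using 1
      abel
    | smul c m hm ihm =>
      obtain ⟨w, hw, h1⟩ := ihm
      refine ⟨c • w, Submodule.smul_mem _ c hw, ?_⟩
      rw [map_smul, ← smul_sub]
      exact Submodule.smul_mem _ c h1
  -- descent of the Galois map
  have hdesc : opBalancer k A' H' B'.tgt ≤
      (balancer k A' H' B'.src B'.tgt).comap (galoisRep k A' H' B') := by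
    intro z hz
    rw [hB'tgt] at hz
    obtain ⟨w, hw, rfl⟩ := myaux_opBalancer'_le_map πH B hπA hπH htgt hz
    have h1 := hβ w
    have h2 : galoisRep k A H B w ∈ balancer k A H B.src B.tgt := hB.descends hw
    have h3 := myaux_map_balancer_le πH B hsrc htgt h2
    have h4 := Submodule.add_mem _ h1 h3
    rw [sub_add_cancel] at h4
    exact h4
  refine ⟨hdesc, ?_, ?_⟩
  · -- injectivity
    rw [← LinearMap.ker_eq_bot, Submodule.eq_bot_iff]
    intro q hq
    rw [LinearMap.mem_ker] at hq
    obtain ⟨u, rfl⟩ := Submodule.Quotient.mk_surjective _ q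
    obtain ⟨w, rfl⟩ := hπ2surj u
    rw [Submodule.mapQ_apply, Submodule.Quotient.mk_eq_zero] at hq
    -- hq : galoisRep B' (π2 w) ∈ bal'
    have h1 : myaux_pi2 πH (galoisRep k A H B w) ∈ balancer k A' H' src' tgt' := by
      have := Submodule.sub_mem _ hq (hβ w)
      rw [sub_sub_cancel] at this
      exact this
    obtain ⟨b, hb, hbeq⟩ := myaux_balancer'_le_map πH B hπA hπH hsrc htgt h1
    have hker0 : myaux_pi2 πH (galoisRep k A H B w - b) = 0 := by
      rw [map_sub, hbeq, sub_self]
    have hsl := myaux_ker_pi2 πH hπH hkerH hker0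
    obtain ⟨w₀, hw₀, hβw₀⟩ := hext _ hsl
    have h6 : galoisRep k A H B (w - w₀) ∈ balancer k A H B.src B.tgt := by
      rw [map_sub]
      have h6' := Submodule.sub_mem _ hb hβw₀
      convert h6' using 1
      abel
    have h7 : Submodule.Quotient.mk (p := opBalancer k A H B.tgt) (w - w₀) = 0 := by
      apply hB.bijective.1
      rw [Submodule.mapQ_apply, map_zero, Submodule.Quotient.mk_eq_zero]
      exact h6
    have h8 : w - w₀ ∈ opBalancer k A H B.tgt := (Submodule.Quotient.mk_eq_zero _).mp h7
    rw [Submodule.Quotient.mk_eq_zero]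
    have e : myaux_pi2 πH w = myaux_pi2 πH (w - w₀) + myaux_pi2 πH w₀ := by
      rw [← map_add, sub_add_cancel]
    rw [e, myaux_pi2_slices πH hIzero hw₀, add_zero]
    exact myaux_map_opBalancer_le πH B htgt h8
  · -- surjectivity
    intro q'
    obtain ⟨z', rfl⟩ := Submodule.Quotient.mk_surjective _ q'
    obtain ⟨z, rfl⟩ := hπ2surj z'
    obtain ⟨q, hq⟩ := hB.bijective.2 (Submodule.Quotient.mk z)
    obtain ⟨w, rfl⟩ := Submodule.Quotient.mk_surjective _ q
    rw [Submodule.mapQ_apply] at hq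
    have hwz : galoisRep k A H B w - z ∈ balancer k A H B.src B.tgt :=
      (Submodule.Quotient.eq _).mp hq
    refine ⟨Submodule.Quotient.mk (myaux_pi2 πH w), ?_⟩
    rw [Submodule.mapQ_apply, Submodule.Quotient.eq]
    have h1 := hβ w
    have h2 := myaux_map_balancer_le πH B hsrc htgt hwz
    rw [map_sub] at h2
    have h4 := Submodule.add_mem _ h1 h2
    rw [sub_add_sub_cancel] at h4
    exact h4
end

section
/- Let G be a finite groupoid and (k(G_0), k(G_1)) its Hopf algebroid of functions. The isotropy quotient of (k(G_0), k(G_1)), obtained by quotienting k(G_1) by the ideal generated by s(f_p) − t(f_p) for p ∈ G_0, is isomorphic as a Hopf algebroid to the Hopf algebroid of functions on the isotropy subgroupoid of G (the subgroupoid of arrows e with s(e) = t(e)). -/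
open TensorProduct

open CategoryTheory

section FunctionAlgebroid

/-- The set of arrows of a groupoid, bundled with their endpoints. -/
abbrev Arw (G : Type) [Groupoid G] : Type := Σ p q : G, p ⟶ q

variable (k G : Type) [Field k] [Groupoid G] [Fintype G] [DecidableEq G]
variable [∀ p q : G, Fintype (p ⟶ q)] [∀ p q : G, DecidableEq (p ⟶ q)]

/-- Representative of the comultiplication of the function Hopf algebroid of a finite
groupoid: `Δ(f_e) = Σ_{e₂ ∘ e₁ = e} f_{e₁} ⊗ f_{e₂}`. -/
noncomputable def comulRep (g : Arw G → k) : TensorProduct k (Arw G → k) (Arw G → k) :=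
  ∑ e₁ : Arw G, ∑ e₂ : Arw G,
    (if h : e₁.2.1 = e₂.1 then g ⟨e₁.1, e₂.2.1, e₁.2.2 ≫ eqToHom h ≫ e₂.2.2⟩ else 0) •
      TensorProduct.tmul k (Pi.single e₁ 1 : Arw G → k) (Pi.single e₂ 1 : Arw G → k)

/-- `B` is the Hopf algebroid of functions on the finite groupoid `G`. -/
def IsFunctionAlgebroid (B : LeftBialgebroid k (G → k) (Arw G → k)) : Prop :=
  (∀ (g : G → k) (e : Arw G), B.src g e = g e.1) ∧
  (∀ (g : G → k) (e : Arw G), B.tgt g e = g e.2.1) ∧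
  (∀ (g : Arw G → k) (p : G), B.counit g p = g ⟨p, p, 𝟙 p⟩) ∧
  (∀ g : Arw G → k,
    B.comul g - comulRep k G g ∈ balancer k (G → k) (Arw G → k) B.src B.tgt)

/-- The span of the characteristic functions of the elements of `S`. -/
def deltaSpan (X : Type) [DecidableEq X] (S : Set X) : Submodule k (X → k) :=
  Submodule.span k ((fun x => (Pi.single x 1 : X → k)) '' S)

/-- `(T₀, T₁)` is a subgroupoid of `G`. -/
def IsSubgroupoidOn (T₀ : Set G) (T₁ : Set (Arw G)) : Prop :=
  (∀ e ∈ T₁, e.1 ∈ T₀ ∧ e.2.1 ∈ T₀) ∧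
  (∀ p ∈ T₀, (⟨p, p, 𝟙 p⟩ : Arw G) ∈ T₁) ∧
  (∀ e₁ e₂ : Arw G, e₁ ∈ T₁ → e₂ ∈ T₁ → ∀ h : e₁.2.1 = e₂.1,
    (⟨e₁.1, e₂.2.1, e₁.2.2 ≫ eqToHom h ≫ e₂.2.2⟩ : Arw G) ∈ T₁) ∧
  (∀ e ∈ T₁, (⟨e.2.1, e.1, Groupoid.inv e.2.2⟩ : Arw G) ∈ T₁)

end FunctionAlgebroid

section Iso

/-- The arrows of the isotropy subgroupoid: arrows with equal source and target. -/
abbrev IsoArw (G : Type) [Groupoid G] : Type := {e : Arw G // e.1 = e.2.1}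

variable (k G : Type) [Field k] [Groupoid G] [Fintype G] [DecidableEq G]
variable [∀ p q : G, Fintype (p ⟶ q)] [∀ p q : G, DecidableEq (p ⟶ q)]

/-- Representative of the comultiplication of the function Hopf algebroid of the
isotropy subgroupoid. -/
noncomputable def comulRepIso (g : IsoArw G → k) :
    TensorProduct k (IsoArw G → k) (IsoArw G → k) :=
  ∑ e₁ : IsoArw G, ∑ e₂ : IsoArw G,
    (if h : e₁.1.2.1 = e₂.1.1 then
        g ⟨⟨e₁.1.1, e₂.1.2.1, e₁.1.2.2 ≫ eqToHom h ≫ e₂.1.2.2⟩,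
          e₁.2.trans (h.trans e₂.2)⟩
      else 0) •
      TensorProduct.tmul k (Pi.single e₁ 1 : IsoArw G → k) (Pi.single e₂ 1 : IsoArw G → k)

/-- `B'` is the Hopf algebroid of functions on the isotropy subgroupoid of `G`. -/
def IsIsoFunctionAlgebroid (B' : LeftBialgebroid k (G → k) (IsoArw G → k)) : Prop :=
  (∀ (g : G → k) (e : IsoArw G), B'.src g e = g e.1.1) ∧
  (∀ (g : G → k) (e : IsoArw G), B'.tgt g e = g e.1.2.1) ∧
  (∀ (g : IsoArw G → k) (p : G), B'.counit g p = g ⟨⟨p, p, 𝟙 p⟩, rfl⟩) ∧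
  (∀ g : IsoArw G → k,
    B'.comul g - comulRepIso k G g ∈ balancer k (G → k) (IsoArw G → k) B'.src B'.tgt)

/-- Restriction of functions on arrows to the isotropy subgroupoid. -/
def resHom : (Arw G → k) →ₐ[k] (IsoArw G → k) :=
  AlgHom.mk' (Pi.ringHom fun e : IsoArw G => Pi.evalRingHom (fun _ : Arw G => k) e.1)
    (fun _ _ => rfl)

end Iso


section Helpers

variable {k G : Type} [Field k] [Groupoid G] [Fintype G] [DecidableEq G]
variable [∀ p q : G, Fintype (p ⟶ q)] [∀ p q : G, DecidableEq (p ⟶ q)]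

lemma resHom_apply' (g : Arw G → k) (e : IsoArw G) : resHom k G g e = g e.1 := rfl

lemma res_single' (e : Arw G) :
    resHom k G (Pi.single e 1) =
      if h : e.1 = e.2.1 then Pi.single (⟨e, h⟩ : IsoArw G) 1 else 0 := by
  funext e'
  rcases e' with ⟨e', h'⟩
  by_cases h : e.1 = e.2.1
  · rw [dif_pos h]
    show Pi.single e 1 e' = _
    rw [Pi.single_apply, Pi.single_apply]
    simp [Subtype.ext_iff]
  · rw [dif_neg h]
    show Pi.single e 1 e' = 0
    rw [Pi.single_apply, if_neg]
    rintro rfl; exact h h'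

lemma sum_iso' {M : Type} [AddCommMonoid M] (f : Arw G → M)
    (hf : ∀ e : Arw G, ¬ e.1 = e.2.1 → f e = 0) :
    ∑ e : Arw G, f e = ∑ e : IsoArw G, f e.1 := by
  classical
  rw [← Finset.sum_filter_of_ne (p := fun e : Arw G => e.1 = e.2.1)
      (fun x _ hx => by_contra fun h => hx (hf x h))]
  exact Finset.sum_subtype _ (by simp) f

lemma map_comulRep' (g : Arw G → k) :
    TensorProduct.map (resHom k G).toLinearMap (resHom k G).toLinearMap (comulRep k G g)
      = comulRepIso k G (resHom k G g) := by
  unfold comulRep comulRepIso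
  rw [map_sum]
  simp only [map_sum, LinearMap.map_smul, TensorProduct.map_tmul]
  rw [sum_iso' (f := fun e₁ : Arw G => ∑ e₂ : Arw G, _)
      (fun e₁ he₁ => by
        apply Finset.sum_eq_zero; intro e₂ _
        rw [show (resHom k G).toLinearMap (Pi.single e₁ 1) = 0 by
          simp [res_single', dif_neg he₁], TensorProduct.zero_tmul, smul_zero])]
  refine Finset.sum_congr rfl fun e₁ _ => ?_
  rw [sum_iso' (f := fun e₂ : Arw G => _)
      (fun e₂ he₂ => by
        rw [show (resHom k G).toLinearMap (Pi.single e₂ 1) = 0 by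
          simp [res_single', dif_neg he₂], TensorProduct.tmul_zero, smul_zero])]
  refine Finset.sum_congr rfl fun e₂ _ => ?_
  have h1 : (resHom k G).toLinearMap (Pi.single e₁.1 1) = Pi.single e₁ 1 := by
    simp [res_single', dif_pos e₁.2]
  have h2 : (resHom k G).toLinearMap (Pi.single e₂.1 1) = Pi.single e₂ 1 := by
    simp [res_single', dif_pos e₂.2]
  rw [h1, h2]
  by_cases h : e₁.1.2.1 = e₂.1.1
  · rw [dif_pos h, dif_pos h]; rfl
  · rw [dif_neg h, dif_neg h]

end Helpers

/-- For a finite groupoid `G`, the isotropy quotient of the Hopf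
algebroid of functions `(k(G₀), k(G₁))` — the quotient of `k(G₁)` by the ideal
generated by `s(f) − t(f)` — is isomorphic, as a Hopf algebroid, to the Hopf algebroid
of functions on the isotropy subgroupoid of `G`, via the restriction map. -/
theorem statement7
    (k G : Type) [Field k] [Groupoid G] [Fintype G] [DecidableEq G]
    [∀ p q : G, Fintype (p ⟶ q)] [∀ p q : G, DecidableEq (p ⟶ q)]
    (B : LeftBialgebroid k (G → k) (Arw G → k)) (hB : IsFunctionAlgebroid k G B)
    (B' : LeftBialgebroid k (G → k) (IsoArw G → k))
    (hB' : IsIsoFunctionAlgebroid k G B')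
    (I : Ideal (Arw G → k))
    (hI : I = Ideal.span {z | ∃ a : G → k, z = B.src a - B.tgt a}) :
    ∃ eqv : ((Arw G → k) ⧸ I) ≃ₐ[k] (IsoArw G → k),
      (∀ g : Arw G → k, eqv (Ideal.Quotient.mk I g) = resHom k G g) ∧
      IsBialgebroidHom B B' (resHom k G) := by
  obtain ⟨hBs, hBt, hBc, hBD⟩ := hB
  obtain ⟨hB's, hB't, hB'c, hB'D⟩ := hB'
  have hsrc : ∀ a : G → k, resHom k G (B.src a) = B'.src a := by
    intro a; funext e; rw [resHom_apply', hBs, hB's]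
  have htgt : ∀ a : G → k, resHom k G (B.tgt a) = B'.tgt a := by
    intro a; funext e; rw [resHom_apply', hBt, hB't]
  -- the balancer submodule maps into the balancer submodule
  have hbal : ∀ z ∈ balancer k (G → k) (Arw G → k) B.src B.tgt,
      TensorProduct.map (resHom k G).toLinearMap (resHom k G).toLinearMap z ∈
        balancer k (G → k) (IsoArw G → k) B'.src B'.tgt := by
    intro z hz
    refine Submodule.span_induction ?_ ?_ ?_ ?_ hz
    · rintro _ ⟨a, x, y, rfl⟩
      rw [map_sub, TensorProduct.map_tmul, TensorProduct.map_tmul]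
      have hx : (resHom k G).toLinearMap (B.tgt a * x) = B'.tgt a * resHom k G x := by
        show resHom k G (B.tgt a * x) = _
        rw [map_mul, htgt]
      have hy : (resHom k G).toLinearMap (B.src a * y) = B'.src a * resHom k G y := by
        show resHom k G (B.src a * y) = _
        rw [map_mul, hsrc]
      rw [hx, hy]
      exact Submodule.subset_span ⟨a, resHom k G x, resHom k G y, rfl⟩
    · rw [map_zero]; exact Submodule.zero_mem _
    · intro x y _ _ hx hy; rw [map_add]; exact Submodule.add_mem _ hx hy
    · intro c x _ hx; rw [LinearMap.map_smul]; exact Submodule.smul_mem _ _ hx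
  -- the ideal is the kernel of the restriction map
  have hker : RingHom.ker (resHom k G) = I := by
    rw [hI]; apply le_antisymm
    · intro g hg
      rw [RingHom.mem_ker] at hg
      rw [pi_eq_sum_univ g]
      refine Submodule.sum_mem _ fun e _ => ?_
      by_cases h : e.1 = e.2.1
      · have h0 : g e = 0 := by
          have := congrFun hg ⟨e, h⟩
          rwa [resHom_apply'] at this
        rw [h0, zero_smul]
        exact Submodule.zero_mem _
      · refine Submodule.smul_of_tower_mem _ _ ?_
        have key : (fun j => if e = j then (1 : k) else 0) =
            (fun j => if e = j then (1 : k) else 0) *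
              (B.src (Pi.single e.1 1) - B.tgt (Pi.single e.1 1)) := by
          funext e'
          rw [Pi.mul_apply, Pi.sub_apply, hBs, hBt]
          by_cases he' : e = e'
          · subst he'
            rw [if_pos rfl, Pi.single_eq_same, Pi.single_apply, if_neg
              (fun hh => h hh.symm)]
            ring
          · rw [if_neg he', zero_mul]
        rw [key]
        exact Ideal.mul_mem_left _ _
          (Ideal.subset_span ⟨Pi.single e.1 1, rfl⟩)
    · rw [Ideal.span_le]
      rintro z ⟨a, rfl⟩
      rw [SetLike.mem_coe, RingHom.mem_ker, map_sub, sub_eq_zero, hsrc, htgt]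
      funext e
      rw [hB's, hB't]
      exact congrArg a e.2
  have hsurj : Function.Surjective (resHom k G) := by
    intro f
    refine ⟨fun e => if h : e.1 = e.2.1 then f ⟨e, h⟩ else 0, funext fun e => ?_⟩
    show (if h : e.1.1 = e.1.2.1 then f ⟨e.1, h⟩ else 0) = f e
    rw [dif_pos e.2]
  rw [← hker]
  refine ⟨Ideal.quotientKerAlgEquivOfSurjective hsurj, fun g => ?_, hsrc, htgt,
      fun h => ?_, fun h => ?_⟩
  · exact Ideal.quotientKerAlgEquivOfSurjective_mk hsurj g
  · funext p
    rw [hB'c, hBc]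
    rfl
  · have t1 := hbal _ (hBD h)
    have t3 := Submodule.neg_mem _ (hB'D (resHom k G h))
    have key : TensorProduct.map (resHom k G).toLinearMap (resHom k G).toLinearMap
          (B.comul h) - B'.comul (resHom k G h) =
        TensorProduct.map (resHom k G).toLinearMap (resHom k G).toLinearMap
          (B.comul h - comulRep k G h) +
        -(B'.comul (resHom k G h) - comulRepIso k G (resHom k G h)) := by
      rw [map_sub, map_comulRep']
      abel
    rw [key]
    exact Submodule.add_mem _ t1 t3
end

section
/- Let D = (V,E) be a finite digraph with no loops and at most one edge between any two vertices, and let A = k(V) with the digraph first-order calculus Ω¹ = k·E, where f_p ω_{a→b} f_q = δ_{p,a} δ_{b,q} ω_{a→b} and df = Σ_{a→b ∈ E} (f(b) − f(a)) ω_{a→b}. Let Ω²_top be the quotient of Ω¹ ⊗_A Ω¹ by the submodule spanned by Σ_{b: a→b→c ∈ E₂} ω_{a→b} ⊗ ω_{b→c} for all pairs (a,c) with a↛c, and define d(ω_{a→b}) = Σ_{t: b→t} ω_{a→b} ∧ ω_{b→t} + Σ_{s: s→a} ω_{s→a} ∧ ω_{a→b} − Σ_{i: a→i→b} ω_{a→i}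 ∧ ω_{i→b}. Then d² f_p = 0 for every p ∈ V. -/
/-! ### The differential calculus of a finite digraph.

`V` is the (finite) vertex set and `E : V → V → Prop` the edge relation (so that there
is at most one edge between any two vertices); we assume no loops.  The function
algebra is `A = V → k`, the space of 1-forms is `Ω¹ = Edge → k` (spanned by the basis
`ω_{a→b}`), the space of vector fields is `X¹ = Edge → k` (spanned by `e_{b←a}`), and
`Ω²_top` is the quotient of the span of 2-paths by the relations
`Σ_{b : a→b→c} ω_{a→b} ⊗ ω_{b→c} = 0` for all pairs `a ↛ c`. -/

section Digraph

variable (k V : Type) [Field k] [Fintype V] [DecidableEq V]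
variable (E : V → V → Prop) [DecidableRel E]

/-- The edges of the digraph. -/
def Edge : Type := {p : V × V // E p.1 p.2}

instance : DecidablePred (fun p : V × V => E p.1 p.2) := fun p => ‹DecidableRel E› p.1 p.2
instance : Fintype (Edge V E) := Subtype.fintype _
instance : DecidableEq (Edge V E) := Subtype.instDecidableEq

/-- Paths of length two in the digraph. -/
def Path2 : Type := {t : V × V × V // E t.1 t.2.1 ∧ E t.2.1 t.2.2}

instance : DecidablePred (fun t : V × V × V => E t.1 t.2.1 ∧ E t.2.1 t.2.2) :=
  fun t => instDecidableAnd
instance : Fintype (Path2 V E) := Subtype.fintype _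

/-- The differential `d : A → Ω¹`, `df = Σ_{a→b} (f(b) − f(a)) ω_{a→b}`. -/
def d0 (f : V → k) : Edge V E → k := fun e => f e.1.2 - f e.1.1

/-- The first edge of a 2-path. -/
def edge1 (t : Path2 V E) : Edge V E := ⟨(t.1.1, t.1.2.1), t.2.1⟩

/-- The second edge of a 2-path. -/
def edge2 (t : Path2 V E) : Edge V E := ⟨(t.1.2.1, t.1.2.2), t.2.2⟩

/-- Representative (in the span of 2-paths) of `dω`, for `ω ∈ Ω¹`:
`(dω)(x→y→z) = ω(x→y) + ω(y→z) − δ_{x→z ∈ E} ω(x→z)`. -/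
def d1rep (ω : Edge V E → k) : Path2 V E → k := fun t =>
  ω (edge1 V E t) + ω (edge2 V E t) -
    (if h : E t.1.1 t.1.2.2 then ω ⟨(t.1.1, t.1.2.2), h⟩ else 0)

/-- The relation submodule `ℳ_top`: for every pair `(a,c)` with `a ↛ c`, the sum of all
2-paths from `a` to `c` is a relation. -/
def topRel : Submodule k (Path2 V E → k) :=
  Submodule.span k {u | ∃ a c : V, ¬ E a c ∧
    u = fun t : Path2 V E => if t.1.1 = a ∧ t.1.2.2 = c then (1 : k) else 0}

/-- `Ω²_top`, the chosen space of 2-forms. -/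
def Omega2 : Type := (Path2 V E → k) ⧸ topRel k V E

instance : AddCommGroup (Omega2 k V E) := by unfold Omega2; infer_instance
instance : Module k (Omega2 k V E) := by unfold Omega2; infer_instance

/-- The differential `d : Ω¹ → Ω²_top`. -/
def d1 (ω : Edge V E → k) : Omega2 k V E :=
  Submodule.Quotient.mk (d1rep k V E ω)

/-- The wedge product `Ω¹ ⊗ Ω¹ → Ω²_top` (as the projection of the tensor product,
realised on the span of 2-paths). -/
def wedge (ω η : Edge V E → k) : Omega2 k V E :=
  Submodule.Quotient.mk (fun t : Path2 V E => ω (edge1 V E t) * η (edge2 V E t))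

/-- Left action of `A` on `Ω¹` : `f_p · ω_{a→b} = δ_{p,a} ω_{a→b}`. -/
def lO (f : V → k) (ω : Edge V E → k) : Edge V E → k := fun e => f e.1.1 * ω e

/-- Right action of `A` on `Ω¹` : `ω_{a→b} · f_q = δ_{b,q} ω_{a→b}`. -/
def rO (ω : Edge V E → k) (f : V → k) : Edge V E → k := fun e => ω e * f e.1.2

/-- Left action of `A` on `X¹` : `f_p · e_{b←a} = δ_{p,b} e_{b←a}`. -/
def lX (f : V → k) (x : Edge V E → k) : Edge V E → k := fun e => f e.1.2 * x e

/-- Right action of `A` on `X¹` : `e_{b←a} · f_q = δ_{a,q} e_{b←a}`. -/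
def rX (x : Edge V E → k) (f : V → k) : Edge V E → k := fun e => x e * f e.1.1

/-- Left action of `A` on the span of 2-paths (at the initial vertex). -/
def lP (f : V → k) (u : Path2 V E → k) : Path2 V E → k := fun t => f t.1.1 * u t

/-- Right action of `A` on the span of 2-paths (at the final vertex). -/
def rP (u : Path2 V E → k) (f : V → k) : Path2 V E → k := fun t => u t * f t.1.2.2

/-- The basis element of `Ω¹` (or of `X¹`) attached to an edge. -/
def delta (e : Edge V E) : Edge V E → k := Pi.single e 1

/-- Left evaluation `ev_L : X¹ ⊗ Ω¹ → A`, `ev_L(e_{b←a} ⊗ ω_{p→q}) = δ_{p,a} δ_{q,b} f_b`. -/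
def evL (x ω : Edge V E → k) : V → k :=
  fun v => ∑ e : Edge V E, if e.1.2 = v then x e * ω e else 0

/-- Right evaluation `ev_R : Ω¹ ⊗ X¹ → A`, `ev_R(ω_{p→q} ⊗ e_{b←a}) = δ_{p,a} δ_{q,b} f_a`. -/
def evR (ω x : Edge V E → k) : V → k :=
  fun v => ∑ e : Edge V E, if e.1.1 = v then ω e * x e else 0

end Digraph

/-- For the digraph calculus with `Ω²_top` and the differential
`d(ω_{a→b}) = Σ_{t:b→t} ω_{a→b}∧ω_{b→t} + Σ_{s:s→a} ω_{s→a}∧ω_{a→b} − Σ_{a→i→b} ω_{a→i}∧ω_{i→b}`,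
one has `d²f_p = 0` for every vertex `p`. -/
theorem statement8
    (k V : Type) [Field k] [Fintype V] [DecidableEq V]
    (E : V → V → Prop) [DecidableRel E]
    (hloop : ∀ v : V, ¬ E v v) :
    ∀ p : V, d1 k V E (d0 k V E (Pi.single p 1)) = 0 := by
  intro p
  unfold d1
  refine (Submodule.Quotient.mk_eq_zero (topRel k V E)).mpr ?_
  have key : d1rep k V E (d0 k V E (Pi.single p 1)) =
      (∑ a ∈ Finset.univ.filter (fun a => ¬ E a p),
        fun t : Path2 V E => if t.1.1 = a ∧ t.1.2.2 = p then (1:k) else 0)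
      - (∑ c ∈ Finset.univ.filter (fun c => ¬ E p c),
        fun t : Path2 V E => if t.1.1 = p ∧ t.1.2.2 = c then (1:k) else 0) := by
    funext t
    rw [Pi.sub_apply, Finset.sum_apply, Finset.sum_apply]
    obtain ⟨⟨x, y, z⟩, hxy, hyz⟩ := t
    simp only [d1rep, d0, edge1, edge2, Pi.sub_apply, Finset.sum_apply,
      Pi.single_apply, ite_and, Finset.sum_ite_eq, Finset.sum_ite_eq',
      Finset.mem_filter, Finset.mem_univ, true_and]
    split_ifs <;> simp_all <;> ring
  rw [key]
  apply sub_mem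
  · exact Submodule.sum_mem _ fun a ha =>
      Submodule.subset_span ⟨a, p, (Finset.mem_filter.mp ha).2, rfl⟩
  · exact Submodule.sum_mem _ fun c hc =>
      Submodule.subset_span ⟨p, c, (Finset.mem_filter.mp hc).2, rfl⟩
end

section
/- With the digraph calculus as above, the map d : Ω¹ → Ω²_top satisfies the Leibniz rules d(f·ω) = df ∧ ω + f·d(ω) and d(ω·f) = d(ω)·f − ω ∧ df for all f ∈ A = k(V) and ω ∈ Ω¹. In particular d extends the first order differential calculus (A, Ω¹, d) to a degree-2 differential graded structure. -/
/-- For the digraph calculus, `d : Ω¹ → Ω²_top` satisfies the Leibniz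
rules `d(f·ω) = df ∧ ω + f·d(ω)` and `d(ω·f) = d(ω)·f − ω ∧ df`, so that `d` extends the
first order differential calculus `(A, Ω¹, d)`. -/
theorem statement9
    (k V : Type) [Field k] [Fintype V] [DecidableEq V]
    (E : V → V → Prop) [DecidableRel E]
    (hloop : ∀ v : V, ¬ E v v) :
    (∀ (f : V → k) (ω : Edge V E → k),
      d1 k V E (lO k V E f ω) =
        wedge k V E (d0 k V E f) ω +
          Submodule.Quotient.mk (lP k V E f (d1rep k V E ω))) ∧
    (∀ (f : V → k) (ω : Edge V E → k),
      d1 k V E (rO k V E ω f) =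
        Submodule.Quotient.mk (rP k V E (d1rep k V E ω) f) -
          wedge k V E ω (d0 k V E f)) := by
  constructor
  · intro f ω
    rw [d1, wedge]; refine Eq.trans ?_ (Submodule.Quotient.mk_add (topRel k V E) ..)
    congr 1
    funext t
    rw [Pi.add_apply]
    obtain ⟨⟨x, y, z⟩, hxy, hyz⟩ := t
    simp only [d1rep, lO, lP, d0, edge1, edge2, Pi.add_apply]
    split_ifs <;> ring
  · intro f ω
    rw [d1, wedge]; refine Eq.trans ?_ (Submodule.Quotient.mk_sub (topRel k V E) ..)
    congr 1
    funext t
    rw [Pi.sub_apply]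
    obtain ⟨⟨x, y, z⟩, hxy, hyz⟩ := t
    simp only [d1rep, rO, rP, d0, edge1, edge2, Pi.sub_apply]
    split_ifs <;> ring
end

section
/- For the digraph calculus with Ω²_top, the map Υ(e_{b←a}) = f_a − f_b satisfies the flatness compatibility: for every basis element e² = e_{p→q→r} ∈ X², Υ(Σ_i ev_L²(e² ⊗ dω_i) x_i) + Υ(Υ(Σ_{j,k} ev_L²(e² ⊗ ω_j ∧ ω_k) x_k) x_j) = 0 in A, where the sums run over dual basis pairs of Ω¹. Explicitly, both cases (p→r an edge, or p↛r) yield f_p − f_r − δ_{p↛r}(f_p − f_r) − δ_{p→r}(f_p − f_r) = 0. -/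
/-- The map `Υ : X¹ → A`, `Υ(e_{b←a}) = f_a − f_b`. -/
def Upsilon (k V : Type) [Field k] [Fintype V] [DecidableEq V]
    (E : V → V → Prop) [DecidableRel E] (x : Edge V E → k) : V → k :=
  fun v => (∑ e : Edge V E, if e.1.1 = v then x e else 0) -
    (∑ e : Edge V E, if e.1.2 = v then x e else 0)

/-- The pairing coefficient `ev_L²(e_{p→q→r} ⊗ ω_{x→y} ∧ ω_{y→z})` relative to a choice
of distinguished middle vertices. -/
def ev2coeff (k V : Type) [Field k] [DecidableEq V] (E : V → V → Prop) [DecidableRel E]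
    (bchoice : V → V → V) (p q r x y z : V) : k :=
  if x = p ∧ z = r then
    ((if y = q then (1 : k) else 0) - (if ¬ E p r ∧ y = bchoice p r then 1 else 0))
  else 0

/-- The `A`-valued pairing of the basis element `e_{p→q→r}` of `X²` against an element
of the span of 2-paths given by a coefficient function `c`. -/
def evAgainst (k V : Type) [Field k] [Fintype V] [DecidableEq V]
    (E : V → V → Prop) [DecidableRel E] (bchoice : V → V → V) (p q r : V)
    (c : Path2 V E → k) : V → k :=
  Pi.single r (∑ t : Path2 V E,
    c t * ev2coeff k V E bchoice p q r t.1.1 t.1.2.1 t.1.2.2)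

/-- The coefficients of `dω_e` in the span of 2-paths:
`dω_{a→b} = Σ_{t:b→t} ω_{a→b}∧ω_{b→t} + Σ_{s:s→a} ω_{s→a}∧ω_{a→b} − Σ_{a→i→b} ω_{a→i}∧ω_{i→b}`. -/
def dcoeff (k V : Type) [Field k] [DecidableEq V] (E : V → V → Prop) [DecidableRel E]
    (e : Edge V E) (t : Path2 V E) : k :=
  (if t.1.1 = e.1.1 ∧ t.1.2.1 = e.1.2 then (1 : k) else 0) +
    (if t.1.2.1 = e.1.1 ∧ t.1.2.2 = e.1.2 then 1 else 0) -
    (if t.1.1 = e.1.1 ∧ t.1.2.2 = e.1.2 then 1 else 0)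

/-- The coefficients of `ω_i ∧ ω_j` in the span of 2-paths. -/
def wcoeff (k V : Type) [Field k] [DecidableEq V] (E : V → V → Prop) [DecidableRel E]
    (i j : Edge V E) (t : Path2 V E) : k :=
  if t.1.1 = i.1.1 ∧ t.1.2.1 = i.1.2 ∧ t.1.2.1 = j.1.1 ∧ t.1.2.2 = j.1.2 then 1 else 0

instance (V : Type) [DecidableEq V] (E : V → V → Prop) [DecidableRel E] :
    DecidableEq (Path2 V E) := Subtype.instDecidableEq

section Helpers

variable {k V : Type} [Field k] [Fintype V] [DecidableEq V]
variable {E : V → V → Prop} [DecidableRel E]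

lemma sum_lX_delta (f : Edge V E → V → k) :
    (∑ i : Edge V E, lX k V E (f i) (delta k V E i)) = fun e => f e e.1.2 := by
  funext e
  rw [Finset.sum_apply]
  have h : ∀ i : Edge V E, lX k V E (f i) (delta k V E i) e
      = if e = i then f e e.1.2 else 0 := by
    intro i
    simp only [lX, delta, Pi.single_apply]
    split_ifs with h
    · subst h; ring
    · ring
  simp only [h, Finset.sum_ite_eq, Finset.mem_univ, if_true]

lemma sum_edge_collapse (a b : V) (h : E a b) (f : Edge V E → k) :
    (∑ e : Edge V E, if e.1.1 = a ∧ e.1.2 = b then f e else 0) = f ⟨(a, b), h⟩ := by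
  have key : ∀ e : Edge V E, (e.1.1 = a ∧ e.1.2 = b) ↔ e = ⟨(a, b), h⟩ := by
    intro e
    constructor
    · rintro ⟨h1, h2⟩; exact Subtype.ext (Prod.ext h1 h2)
    · rintro rfl; exact ⟨rfl, rfl⟩
  rw [Finset.sum_eq_single_of_mem ⟨(a, b), h⟩ (Finset.mem_univ _)]
  · rw [if_pos ⟨rfl, rfl⟩]
  · intro e _ hne; rw [if_neg (fun hc => hne ((key e).1 hc))]

lemma sum_path_collapse (a m c : V) (h1 : E a m) (h2 : E m c) (f : Path2 V E → k) :
    (∑ t : Path2 V E, if t.1.1 = a ∧ t.1.2.1 = m ∧ t.1.2.2 = c then f t else 0)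
      = f ⟨(a, m, c), h1, h2⟩ := by
  have key : ∀ t : Path2 V E, (t.1.1 = a ∧ t.1.2.1 = m ∧ t.1.2.2 = c) ↔
      t = ⟨(a, m, c), h1, h2⟩ := by
    intro t
    constructor
    · rintro ⟨ha, hm, hc⟩
      exact Subtype.ext (Prod.ext ha (Prod.ext hm hc))
    · rintro rfl; exact ⟨rfl, rfl, rfl⟩
  rw [Finset.sum_eq_single_of_mem ⟨(a, m, c), h1, h2⟩ (Finset.mem_univ _)]
  · rw [if_pos ⟨rfl, rfl, rfl⟩]
  · intro t _ hne; rw [if_neg (fun hc => hne ((key t).1 hc))]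

lemma ev2coeff_eq (bchoice : V → V → V) (p q r x y z : V) :
    ev2coeff k V E bchoice p q r x y z =
      (if x = p ∧ y = q ∧ z = r then (1 : k) else 0) -
      (if ¬ E p r ∧ x = p ∧ y = bchoice p r ∧ z = r then 1 else 0) := by
  unfold ev2coeff
  split_ifs <;> simp_all <;> tauto

lemma Upsilon_chi (a b : V) (h : E a b) :
    Upsilon k V E (fun e => if a = e.1.1 ∧ b = e.1.2 then (1 : k) else 0)
      = fun v => (if a = v then (1 : k) else 0) - (if b = v then 1 else 0) := by
  funext v
  unfold Upsilon
  have h1 : (∑ e : Edge V E, if e.1.1 = v then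
        (if a = e.1.1 ∧ b = e.1.2 then (1 : k) else 0) else 0)
      = ∑ e : Edge V E, if e.1.1 = a ∧ e.1.2 = b then (if a = v then (1 : k) else 0) else 0 :=
    Finset.sum_congr rfl (fun e _ => by
      by_cases hc : a = e.1.1 ∧ b = e.1.2
      · rw [if_pos hc,
          if_pos (show e.1.1 = a ∧ e.1.2 = b from ⟨hc.1.symm, hc.2.symm⟩), ← hc.1]
      · rw [if_neg hc,
          if_neg (show ¬(e.1.1 = a ∧ e.1.2 = b) from fun hk => hc ⟨hk.1.symm, hk.2.symm⟩),
          ite_self])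
  have h2 : (∑ e : Edge V E, if e.1.2 = v then
        (if a = e.1.1 ∧ b = e.1.2 then (1 : k) else 0) else 0)
      = ∑ e : Edge V E, if e.1.1 = a ∧ e.1.2 = b then (if b = v then (1 : k) else 0) else 0 :=
    Finset.sum_congr rfl (fun e _ => by
      by_cases hc : a = e.1.1 ∧ b = e.1.2
      · rw [if_pos hc,
          if_pos (show e.1.1 = a ∧ e.1.2 = b from ⟨hc.1.symm, hc.2.symm⟩), ← hc.2]
      · rw [if_neg hc,
          if_neg (show ¬(e.1.1 = a ∧ e.1.2 = b) from fun hk => hc ⟨hk.1.symm, hk.2.symm⟩),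
          ite_self])
  rw [h1, h2, sum_edge_collapse a b h, sum_edge_collapse a b h]

lemma Upsilon_sub (x y : Edge V E → k) :
    Upsilon k V E (fun e => x e - y e)
      = fun v => Upsilon k V E x v - Upsilon k V E y v := by
  funext v
  unfold Upsilon
  have h1 : ∀ w : V, (∑ e : Edge V E, if e.1.1 = w then x e - y e else 0)
      = (∑ e : Edge V E, if e.1.1 = w then x e else 0) -
        (∑ e : Edge V E, if e.1.1 = w then y e else 0) := by
    intro w
    rw [← Finset.sum_sub_distrib]
    exact Finset.sum_congr rfl (fun e _ => by split_ifs <;> ring)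
  have h2 : ∀ w : V, (∑ e : Edge V E, if e.1.2 = w then x e - y e else 0)
      = (∑ e : Edge V E, if e.1.2 = w then x e else 0) -
        (∑ e : Edge V E, if e.1.2 = w then y e else 0) := by
    intro w
    rw [← Finset.sum_sub_distrib]
    exact Finset.sum_congr rfl (fun e _ => by split_ifs <;> ring)
  rw [h1, h2]
  ring

lemma Upsilon_const_mul (c : k) (x : Edge V E → k) :
    Upsilon k V E (fun e => c * x e) = fun v => c * Upsilon k V E x v := by
  funext v
  unfold Upsilon
  have h1 : ∀ w : V, (∑ e : Edge V E, if e.1.1 = w then c * x e else 0)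
      = c * ∑ e : Edge V E, if e.1.1 = w then x e else 0 := by
    intro w
    rw [Finset.mul_sum]
    exact Finset.sum_congr rfl (fun e _ => by split_ifs <;> ring)
  have h2 : ∀ w : V, (∑ e : Edge V E, if e.1.2 = w then c * x e else 0)
      = c * ∑ e : Edge V E, if e.1.2 = w then x e else 0 := by
    intro w
    rw [Finset.mul_sum]
    exact Finset.sum_congr rfl (fun e _ => by split_ifs <;> ring)
  rw [h1, h2]
  ring

lemma evAgainst_apply_pos (bchoice : V → V → V) (p q r : V)
    (hpq : E p q) (hqr : E q r) (hpr : E p r) (c : Path2 V E → k) :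
    evAgainst k V E bchoice p q r c = Pi.single r (c ⟨(p, q, r), hpq, hqr⟩) := by
  unfold evAgainst
  congr 1
  have h : ∀ t : Path2 V E,
      c t * ev2coeff k V E bchoice p q r t.1.1 t.1.2.1 t.1.2.2
        = (if t.1.1 = p ∧ t.1.2.1 = q ∧ t.1.2.2 = r then c t else 0) := by
    intro t
    rw [ev2coeff_eq]
    have : ¬ (¬ E p r ∧ t.1.1 = p ∧ t.1.2.1 = bchoice p r ∧ t.1.2.2 = r) := by
      intro hcon; exact hcon.1 hpr
    rw [if_neg this]
    split_ifs <;> ring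
  rw [Finset.sum_congr rfl (fun t _ => h t), sum_path_collapse p q r hpq hqr]

lemma evAgainst_apply_neg (bchoice : V → V → V) (p q r : V)
    (hpq : E p q) (hqr : E q r) (hpr : ¬ E p r)
    (hb1 : E p (bchoice p r)) (hb2 : E (bchoice p r) r) (c : Path2 V E → k) :
    evAgainst k V E bchoice p q r c
      = Pi.single r (c ⟨(p, q, r), hpq, hqr⟩ - c ⟨(p, bchoice p r, r), hb1, hb2⟩) := by
  unfold evAgainst
  congr 1
  have h : ∀ t : Path2 V E,
      c t * ev2coeff k V E bchoice p q r t.1.1 t.1.2.1 t.1.2.2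
        = (if t.1.1 = p ∧ t.1.2.1 = q ∧ t.1.2.2 = r then c t else 0)
          - (if t.1.1 = p ∧ t.1.2.1 = bchoice p r ∧ t.1.2.2 = r then c t else 0) := by
    intro t
    rw [ev2coeff_eq]
    simp only [hpr, not_false_iff, true_and]
    split_ifs <;> ring
  rw [Finset.sum_congr rfl (fun t _ => h t), Finset.sum_sub_distrib,
    sum_path_collapse p q r hpq hqr, sum_path_collapse p (bchoice p r) r hb1 hb2]

lemma dcoeff_mk (e : Edge V E) (a m c : V) (h1 : E a m) (h2 : E m c) :
    dcoeff k V E e ⟨(a, m, c), h1, h2⟩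
      = (if a = e.1.1 ∧ m = e.1.2 then (1 : k) else 0)
        + (if m = e.1.1 ∧ c = e.1.2 then 1 else 0)
        - (if a = e.1.1 ∧ c = e.1.2 then 1 else 0) := rfl

lemma wcoeff_mk (j i : Edge V E) (a m c : V) (h1 : E a m) (h2 : E m c) :
    wcoeff k V E j i ⟨(a, m, c), h1, h2⟩
      = (if a = j.1.1 ∧ m = j.1.2 ∧ m = i.1.1 ∧ c = i.1.2 then (1 : k) else 0) := rfl

end Helpers

set_option maxHeartbeats 1000000 in
/-- For the digraph calculus with `Ω²_top`, the map
`Υ(e_{b←a}) = f_a − f_b` satisfies the flatness compatibility: for every reduced-basis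
element `e² = e_{p→q→r}` of `X²`,
`Υ(Σ_i ev_L²(e² ⊗ dω_i) x_i) + Υ(Υ(Σ_{j,k} ev_L²(e² ⊗ ω_j ∧ ω_k) x_k) x_j) = 0` in `A`.
(This ensures that the antipode of `HX¹` descends to `DX`.) -/
theorem statement13
    (k V : Type) [Field k] [Fintype V] [DecidableEq V]
    (E : V → V → Prop) [DecidableRel E]
    (hloop : ∀ v : V, ¬ E v v)
    (bchoice : V → V → V)
    (hbchoice : ∀ a c : V, ¬ E a c → (∃ b, E a b ∧ E b c) →
      E a (bchoice a c) ∧ E (bchoice a c) c) :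
    ∀ p q r : V, E p q → E q r → (¬ E p r → q ≠ bchoice p r) →
      Upsilon k V E (∑ i : Edge V E,
          lX k V E (evAgainst k V E bchoice p q r (dcoeff k V E i)) (delta k V E i)) +
      Upsilon k V E (∑ j : Edge V E,
          lX k V E
            (Upsilon k V E (∑ i : Edge V E,
              lX k V E (evAgainst k V E bchoice p q r (wcoeff k V E j i))
                (delta k V E i)))
            (delta k V E j)) = 0 := by
  intro p q r hpq hqr hqb
  have hqr' : q ≠ r := fun h => hloop q (h ▸ hqr)
  have hUqr := Upsilon_chi (k := k) q r hqr
  have hUpq := Upsilon_chi (k := k) p q hpq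
  simp only [sum_lX_delta]
  by_cases hpr : E p r
  · have hUpr := Upsilon_chi (k := k) p r hpr
    have hA : (fun e : Edge V E => evAgainst k V E bchoice p q r (dcoeff k V E e) e.1.2)
        = fun e => (if q = e.1.1 ∧ r = e.1.2 then (1 : k) else 0)
            - (if p = e.1.1 ∧ r = e.1.2 then 1 else 0) := by
      funext e
      rw [evAgainst_apply_pos bchoice p q r hpq hqr hpr, Pi.single_apply,
        dcoeff_mk e p q r hpq hqr]
      by_cases h : e.1.2 = r
      · rw [if_pos h]
        simp only [h, eq_self_iff_true, and_true]
        rw [if_neg (show ¬(p = e.1.1 ∧ q = r) from fun hc => hqr' hc.2)]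
        ring1
      · rw [if_neg h,
          if_neg (show ¬(q = e.1.1 ∧ r = e.1.2) from fun hc => h hc.2.symm),
          if_neg (show ¬(p = e.1.1 ∧ r = e.1.2) from fun hc => h hc.2.symm)]
        ring1
    have hB : (fun j : Edge V E => Upsilon k V E
          (fun i => evAgainst k V E bchoice p q r (wcoeff k V E j i) i.1.2) j.1.2)
        = fun j => if p = j.1.1 ∧ q = j.1.2 then (1 : k) else 0 := by
      funext j
      have hin : (fun i : Edge V E => evAgainst k V E bchoice p q r (wcoeff k V E j i) i.1.2)
          = fun i => (if p = j.1.1 ∧ q = j.1.2 then (1 : k) else 0) *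
              (if q = i.1.1 ∧ r = i.1.2 then 1 else 0) := by
        funext i
        rw [evAgainst_apply_pos bchoice p q r hpq hqr hpr, Pi.single_apply,
          wcoeff_mk j i p q r hpq hqr]
        by_cases h : i.1.2 = r
        · rw [if_pos h]
          simp only [h, eq_self_iff_true, and_true]
          split_ifs <;> first | ring1 | tauto
        · rw [if_neg h,
            if_neg (show ¬(q = i.1.1 ∧ r = i.1.2) from fun hc => h hc.2.symm)]
          ring1
      rw [hin, Upsilon_const_mul, hUqr]
      beta_reduce
      by_cases h1 : p = j.1.1 ∧ q = j.1.2
      · rw [if_pos h1, if_pos h1.2,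
          if_neg (show ¬ r = j.1.2 from fun hc => hqr' (h1.2.trans hc.symm))]
        ring1
      · rw [if_neg h1]
        ring1
    rw [hA, hB, Upsilon_sub, hUqr, hUpr, hUpq]
    funext v
    simp only [Pi.add_apply, Pi.zero_apply]
    beta_reduce
    ring
  · obtain ⟨hb1, hb2⟩ := hbchoice p r hpr ⟨q, hpq, hqr⟩
    have hqb' : q ≠ bchoice p r := hqb hpr
    have hbr' : bchoice p r ≠ r := fun h => hloop r (by rw [h] at hb2; exact hb2)
    have hUbr := Upsilon_chi (k := k) (bchoice p r) r hb2
    have hUpb := Upsilon_chi (k := k) p (bchoice p r) hb1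
    have hA : (fun e : Edge V E => evAgainst k V E bchoice p q r (dcoeff k V E e) e.1.2)
        = fun e => (if q = e.1.1 ∧ r = e.1.2 then (1 : k) else 0)
            - (if bchoice p r = e.1.1 ∧ r = e.1.2 then 1 else 0) := by
      funext e
      rw [evAgainst_apply_neg bchoice p q r hpq hqr hpr hb1 hb2, Pi.single_apply,
        dcoeff_mk e p q r hpq hqr, dcoeff_mk e p (bchoice p r) r hb1 hb2]
      by_cases h : e.1.2 = r
      · rw [if_pos h]
        simp only [h, eq_self_iff_true, and_true]
        rw [if_neg (show ¬(p = e.1.1 ∧ q = r) from fun hc => hqr' hc.2),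
          if_neg (show ¬(p = e.1.1 ∧ bchoice p r = r) from fun hc => hbr' hc.2)]
        ring1
      · rw [if_neg h,
          if_neg (show ¬(q = e.1.1 ∧ r = e.1.2) from fun hc => h hc.2.symm),
          if_neg (show ¬(bchoice p r = e.1.1 ∧ r = e.1.2) from fun hc => h hc.2.symm)]
        ring1
    have hB : (fun j : Edge V E => Upsilon k V E
          (fun i => evAgainst k V E bchoice p q r (wcoeff k V E j i) i.1.2) j.1.2)
        = fun j => (if p = j.1.1 ∧ q = j.1.2 then (1 : k) else 0)
            - (if p = j.1.1 ∧ bchoice p r = j.1.2 then 1 else 0) := by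
      funext j
      have hin : (fun i : Edge V E => evAgainst k V E bchoice p q r (wcoeff k V E j i) i.1.2)
          = fun i => (if p = j.1.1 ∧ q = j.1.2 then (1 : k) else 0) *
              (if q = i.1.1 ∧ r = i.1.2 then 1 else 0) -
              (if p = j.1.1 ∧ bchoice p r = j.1.2 then (1 : k) else 0) *
              (if bchoice p r = i.1.1 ∧ r = i.1.2 then 1 else 0) := by
        funext i
        rw [evAgainst_apply_neg bchoice p q r hpq hqr hpr hb1 hb2, Pi.single_apply,
          wcoeff_mk j i p q r hpq hqr, wcoeff_mk j i p (bchoice p r) r hb1 hb2]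
        by_cases h : i.1.2 = r
        · rw [if_pos h]
          simp only [h, eq_self_iff_true, and_true]
          split_ifs <;> first | ring1 | tauto
        · rw [if_neg h,
            if_neg (show ¬(q = i.1.1 ∧ r = i.1.2) from fun hc => h hc.2.symm),
            if_neg (show ¬(bchoice p r = i.1.1 ∧ r = i.1.2) from fun hc => h hc.2.symm)]
          ring1
      rw [hin, Upsilon_sub, Upsilon_const_mul, Upsilon_const_mul, hUqr, hUbr]
      beta_reduce
      by_cases h1 : p = j.1.1 ∧ q = j.1.2
      · have h2 : ¬(p = j.1.1 ∧ bchoice p r = j.1.2) :=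
          fun hc => hqb' (h1.2.trans hc.2.symm)
        rw [if_pos h1, if_neg h2, if_pos h1.2,
          if_neg (show ¬ r = j.1.2 from fun hc => hqr' (h1.2.trans hc.symm))]
        ring1
      · by_cases h2 : p = j.1.1 ∧ bchoice p r = j.1.2
        · rw [if_neg h1, if_pos h2, if_pos h2.2,
            if_neg (show ¬ r = j.1.2 from fun hc => hbr' (h2.2.trans hc.symm))]
          ring1
        · rw [if_neg h1, if_neg h2]
          ring1
    rw [hA, hB, Upsilon_sub, Upsilon_sub, hUqr, hUbr, hUpq, hUpb]
    funext v
    simp only [Pi.add_apply, Pi.zero_apply]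
    beta_reduce
    ring
end

section
/- Let (A,H) be a left bialgebroid and (Ā, H^iso) its isotropy quotient, where Ā = A/⟨ab − ba⟩ and H^iso = H/⟨s(a) − t(a)⟩. Then the category of left H^iso-modules is isomorphic to the full subcategory of left H-modules M on which the induced left and right A-actions (via s and t) coincide, i.e. the H-modules whose underlying A-bimodule is symmetric. -/
open TensorProduct

/-- Let `(A,H)` be a left bialgebroid and `H^iso = H/⟨s(a) − t(a)⟩`
its isotropy quotient (realised by a surjective algebra map `π` whose kernel is the
isotropy ideal).  Then left `H^iso`-modules are exactly (and uniquely) the left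
`H`-modules on which the left and right `A`-actions via `s` and `t` coincide, i.e.
those whose underlying `A`-bimodule is symmetric; together with the fact that
morphisms are unaffected by restriction of scalars, this identifies the category of
left `H^iso`-modules with the full subcategory of such left `H`-modules. -/
theorem statement15
    (k A H H' : Type) [Field k] [Ring A] [Ring H] [Ring H']
    [Algebra k A] [Algebra k H] [Algebra k H']
    (B : LeftBialgebroid k A H)
    (π : H →ₐ[k] H') (hπ : Function.Surjective π)
    (hker : ∀ h : H, π h = 0 ↔ h ∈
      Submodule.span k {z | ∃ (x : H) (a : A) (y : H), z = x * (B.src a - B.tgt a) * y}) :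
    ∀ (M : Type) [AddCommGroup M] [Module H M],
      (∃! _inst : Module H' M, ∀ (h : H) (m : M), (π h : H') • m = h • m) ↔
      (∀ (a : A) (m : M), B.src a • m = B.tgt a • m) := by
  
  intro M _ _
  constructor
  · rintro ⟨inst, hcomp, -⟩ a m
    have hz : π (B.src a - B.tgt a) = 0 := (hker _).mpr
      (Submodule.subset_span ⟨1, a, 1, by rw [one_mul, mul_one]⟩)
    have h1 : π (B.src a) = π (B.tgt a) := by
      have := sub_eq_zero.mp (by simpa [map_sub] using hz)
      exact this
    calc B.src a • m = (π (B.src a) : H') • m := (hcomp _ m).symm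
      _ = (π (B.tgt a) : H') • m := by rw [h1]
      _ = B.tgt a • m := hcomp _ m
  · intro hsym
    -- kernel elements act by zero
    have hzero' : ∀ h ∈ Submodule.span k
        {z | ∃ (x : H) (a : A) (y : H), z = x * (B.src a - B.tgt a) * y},
        ∀ m : M, h • m = 0 := by
      intro h hmem m
      induction hmem using Submodule.span_induction with
      | mem z hzm =>
        obtain ⟨x, a, y, rfl⟩ := hzm
        rw [mul_smul, mul_smul, sub_smul, hsym, sub_self, smul_zero]
      | zero => exact zero_smul H m
      | add x y _ _ hx hy => rw [add_smul, hx, hy, add_zero]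
      | smul c x _ hx =>
        rw [Algebra.smul_def, mul_smul, hx, smul_zero]
    have hzero : ∀ h : H, π h = 0 → ∀ m : M, h • m = 0 :=
      fun h hh => hzero' h ((hker h).mp hh)
    have hcong : ∀ g h : H, π g = π h → ∀ m : M, g • m = h • m := by
      intro g h hgh m
      have : (g - h) • m = 0 := hzero _ (by rw [map_sub, hgh, sub_self]) m
      have := sub_eq_zero.mp (by rwa [sub_smul] at this)
      exact this
    let σ : H' → H := Function.surjInv hπ
    have hσ : ∀ h' : H', π (σ h') = h' := fun h' => Function.surjInv_eq hπ h'
    refine ⟨{ smul := fun h' m => σ h' • m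
              one_smul := fun m => ?_
              mul_smul := fun x y m => ?_
              smul_zero := fun h' => smul_zero (σ h')
              smul_add := fun h' m n => smul_add (σ h') m n
              add_smul := fun x y m => ?_
              zero_smul := fun m => ?_ }, fun h m => ?_, fun inst' hinst' => ?_⟩
    · show σ (x * y) • m = σ x • σ y • m
      rw [hcong (σ (x * y)) (σ x * σ y) (by rw [hσ, map_mul, hσ, hσ]), mul_smul]
    · show σ 1 • m = m
      rw [hcong (σ 1) 1 (by rw [hσ, map_one]), one_smul]
    · show σ (x + y) • m = σ x • m + σ y • m
      rw [hcong (σ (x + y)) (σ x + σ y) (by rw [hσ, map_add, hσ, hσ]), add_smul]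
    · show σ 0 • m = 0
      rw [hcong (σ 0) 0 (by rw [hσ, map_zero]), zero_smul]
    · show σ (π h) • m = h • m
      exact hcong _ _ (hσ _) m
    · refine Module.ext' _ _ fun h' m => ?_
      obtain ⟨h, rfl⟩ := hπ h'
      show (haveI := inst'; π h • m) = σ (π h) • m
      rw [hinst' h m]
      exact (hcong _ _ (hσ _) m).symm
end
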